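/- arXiv:2509.25917 — 5 statements merged into one kernel-verified Lean document; each statement's English description precedes it below -/
import Mathlib

section
/- Let a > 0 and let L : (0,∞) → (0,∞) be measurable, slowly varying at infinity, and locally bounded on [a,∞). Then for every r > -1, the integral ∫_a^x t^r L(t) dt is asymptotically equivalent to x^{r+1} L(x)/(r+1) as x → ∞, i.e. the ratio of the two quantities tends to 1. -/
open MeasureTheory Filter Set Real

/-- `L` is slowly varying at infinity: for every `c > 0`, `L (c*x) / L x → 1` as `x → ∞`. -/
def SlowlyVarying (L : ℝ → ℝ) : Prop :=
  ∀ c : ℝ, 0 < c → Tendsto (fun x => L (c * x) / L x) atTop (nhds 1)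

lemma uct (h : ℝ → ℝ) (hmeas : Measurable h)
    (hconv : ∀ t : ℝ, Tendsto (fun u => h (u + t) - h u) atTop (nhds 0)) :
    ∀ ε : ℝ, 0 < ε → ∃ X : ℝ, ∀ u, X ≤ u → ∀ t ∈ Icc (0:ℝ) 1, |h (u + t) - h u| ≤ ε := by
  intro ε hε
  by_contra hcon
  push_neg at hcon
  -- extract sequences u k ≥ k, t k ∈ [0,1] with ε < |h (u k + t k) - h (u k)|
  have hseq : ∀ k : ℕ, ∃ u : ℝ, (k : ℝ) ≤ u ∧ ∃ t ∈ Icc (0:ℝ) 1, ε < |h (u + t) - h u| := by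
    intro k; obtain ⟨u, hu, t, ht, hlt⟩ := hcon (k : ℝ); exact ⟨u, hu, t, ht, hlt⟩
  choose u hu t ht hlt using hseq
  have hut : Tendsto u atTop atTop := tendsto_atTop_mono hu tendsto_natCast_atTop_atTop
  have hut' : Tendsto (fun k => u k + t k) atTop atTop := by
    apply tendsto_atTop_mono (fun k => ?_) hut
    nlinarith [(ht k).1]
  -- the measurable sets
  set V : ℕ → Set ℝ := fun k => {s : ℝ | |h (u k + s) - h (u k)| ≤ ε / 2} with hV
  set V' : ℕ → Set ℝ := fun k => {s : ℝ | |h (u k + t k + s) - h (u k + t k)| ≤ ε / 2} with hV'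
  have hVmeas : ∀ k, MeasurableSet (V k) := by
    intro k
    have : Measurable fun s => |h (u k + s) - h (u k)| :=
      ((hmeas.comp (measurable_const.add measurable_id)).sub measurable_const).abs
    exact this measurableSet_Iic
  have hV'meas : ∀ k, MeasurableSet (V' k) := by
    intro k
    have : Measurable fun s => |h (u k + t k + s) - h (u k + t k)| :=
      ((hmeas.comp (measurable_const.add measurable_id)).sub measurable_const).abs
    exact this measurableSet_Iic
  set W : ℕ → Set ℝ := fun n => Icc (0:ℝ) 3 ∩ ⋂ k ∈ Ici n, V k with hW
  set W' : ℕ → Set ℝ := fun n => Icc (0:ℝ) 2 ∩ ⋂ k ∈ Ici n, V' k with hW'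
  have hWmeas : ∀ n, MeasurableSet (W n) := fun n =>
    measurableSet_Icc.inter (MeasurableSet.biInter (to_countable _) fun k _ => hVmeas k)
  have hW'meas : ∀ n, MeasurableSet (W' n) := fun n =>
    measurableSet_Icc.inter (MeasurableSet.biInter (to_countable _) fun k _ => hV'meas k)
  -- monotone unions cover
  have hWmono : Monotone W := by
    intro m n hmn
    exact inter_subset_inter_right _ (biInter_subset_biInter_left (Ici_subset_Ici.2 hmn))
  have hW'mono : Monotone W' := by
    intro m n hmn
    exact inter_subset_inter_right _ (biInter_subset_biInter_left (Ici_subset_Ici.2 hmn))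
  have hWU : ⋃ n, W n = Icc (0:ℝ) 3 := by
    apply Subset.antisymm (iUnion_subset fun n => inter_subset_left)
    intro s hs
    have : ∀ᶠ k in atTop, s ∈ V k := by
      have := (hconv s).comp hut
      have := (this.eventually (eventually_le_nhds (by linarith : (0:ℝ) < ε/2))).and
        (this.eventually (eventually_ge_nhds (by linarith : -(ε/2) < (0:ℝ))))
      filter_upwards [this] with k hk
      simp only [V, Function.comp, mem_setOf_eq, abs_le]
      exact ⟨hk.2, hk.1⟩
    obtain ⟨n, hn⟩ := this.exists_forall_of_atTop
    exact mem_iUnion.2 ⟨n, hs, mem_biInter fun k hk => hn k hk⟩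
  have hW'U : ⋃ n, W' n = Icc (0:ℝ) 2 := by
    apply Subset.antisymm (iUnion_subset fun n => inter_subset_left)
    intro s hs
    have : ∀ᶠ k in atTop, s ∈ V' k := by
      have := (hconv s).comp hut'
      have := (this.eventually (eventually_le_nhds (by linarith : (0:ℝ) < ε/2))).and
        (this.eventually (eventually_ge_nhds (by linarith : -(ε/2) < (0:ℝ))))
      filter_upwards [this] with k hk
      simp only [V', Function.comp, mem_setOf_eq, abs_le]
      exact ⟨hk.2, hk.1⟩
    obtain ⟨n, hn⟩ := this.exists_forall_of_atTop
    exact mem_iUnion.2 ⟨n, hs, mem_biInter fun k hk => hn k hk⟩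
  -- measures converge
  have hWlim : Tendsto (fun n => volume (W n)) atTop (nhds (volume (Icc (0:ℝ) 3))) := by
    have := tendsto_measure_iUnion_atTop (μ := volume) hWmono
    rwa [hWU] at this
  have hW'lim : Tendsto (fun n => volume (W' n)) atTop (nhds (volume (Icc (0:ℝ) 2))) := by
    have := tendsto_measure_iUnion_atTop (μ := volume) hW'mono
    rwa [hW'U] at this
  rw [Real.volume_Icc] at hWlim hW'lim
  have h3 : ∀ᶠ n in atTop, (ENNReal.ofReal 2.5) < volume (W n) :=
    hWlim.eventually_const_lt (by norm_num)
  have h2 : ∀ᶠ n in atTop, (ENNReal.ofReal 1.75) < volume (W' n) :=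
    hW'lim.eventually_const_lt (by norm_num)
  obtain ⟨n, hn3, hn2⟩ := (h3.and h2).exists
  -- translate W' n by t n
  set B : Set ℝ := (fun s => s + -(t n)) ⁻¹' (W' n) with hB
  have hBmeas : MeasurableSet B := (hW'meas n).preimage (measurable_id.add_const _)
  have hBvol : volume B = volume (W' n) := measure_preimage_add_right volume _ _
  have hBsub : B ⊆ Icc (0:ℝ) 3 := by
    intro s hs
    have : s + -(t n) ∈ Icc (0:ℝ) 2 := hs.1
    have h0 := (ht n).1; have h1 := (ht n).2
    constructor <;> [linarith [this.1]; linarith [this.2]]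
  -- intersection is nonempty
  have hsub : W n ∪ B ⊆ Icc (0:ℝ) 3 := union_subset (fun s hs => hs.1) hBsub
  have hle : volume (W n ∪ B) ≤ ENNReal.ofReal 3 := by
    calc volume (W n ∪ B) ≤ volume (Icc (0:ℝ) 3) := measure_mono hsub
    _ = ENNReal.ofReal 3 := by rw [Real.volume_Icc]; norm_num
  have hkey : volume (W n ∩ B) ≠ 0 := by
    have heq := measure_union_add_inter (μ := volume) (W n) hBmeas
    intro h0
    rw [h0, add_zero] at heq
    have : ENNReal.ofReal 2.5 + ENNReal.ofReal 1.75 < volume (W n) + volume B :=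
      ENNReal.add_lt_add hn3 (hBvol ▸ hn2)
    rw [← heq] at this
    have : ENNReal.ofReal 2.5 + ENNReal.ofReal 1.75 < ENNReal.ofReal 3 := lt_of_lt_of_le this hle
    rw [← ENNReal.ofReal_add (by norm_num) (by norm_num)] at this
    rw [ENNReal.ofReal_lt_ofReal_iff (by norm_num)] at this
    norm_num at this
  obtain ⟨s, hsW, hsB⟩ := nonempty_of_measure_ne_zero hkey
  -- contradiction
  have h1 : |h (u n + s) - h (u n)| ≤ ε / 2 := by
    have := hsW.2; simp only [mem_iInter] at this; exact this n (le_refl n)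
  have h2' : |h (u n + t n + (s + -(t n))) - h (u n + t n)| ≤ ε / 2 := by
    have := hsB.2; simp only [mem_iInter] at this; exact this n (le_refl n)
  have heq2 : u n + t n + (s + -(t n)) = u n + s := by ring
  rw [heq2] at h2'
  have := hlt n
  have htri : |h (u n + t n) - h (u n)| ≤ ε := by
    calc |h (u n + t n) - h (u n)|
        = |(h (u n + t n) - h (u n + s)) + (h (u n + s) - h (u n))| := by ring_nf
      _ ≤ |h (u n + t n) - h (u n + s)| + |h (u n + s) - h (u n)| := abs_add_le _ _
      _ ≤ ε / 2 + ε / 2 := add_le_add (by rw [abs_sub_comm]; exact h2') h1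
      _ = ε := by ring
  linarith

lemma chain_step (h : ℝ → ℝ) (ε X : ℝ) (hε : 0 ≤ ε)
    (H : ∀ u, X ≤ u → ∀ t ∈ Icc (0:ℝ) 1, |h (u + t) - h u| ≤ ε) :
    ∀ n : ℕ, ∀ u, X ≤ u → ∀ t, 0 ≤ t → t ≤ (n:ℝ) + 1 → |h (u + t) - h u| ≤ ((n:ℝ) + 1) * ε := by
  intro n
  induction n with
  | zero => intro u hu t ht0 ht1; simpa using H u hu t ⟨ht0, by simpa using ht1⟩
  | succ n ih =>
    intro u hu t ht0 ht1
    push_cast at ht1 ⊢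
    by_cases hc : t ≤ (n:ℝ) + 1
    · calc |h (u + t) - h u| ≤ ((n:ℝ) + 1) * ε := ih u hu t ht0 hc
        _ ≤ ((n:ℝ) + 1 + 1) * ε := by nlinarith [Nat.cast_nonneg (α := ℝ) n]
        
    · push_neg at hc
      have key : |h (u + t) - h u| ≤ |h (u + t) - h (u + (t-1))| + |h (u + (t-1)) - h u| := by
        calc |h (u + t) - h u| = |(h (u + t) - h (u + (t-1))) + (h (u + (t-1)) - h u)| := by
              ring_nf
          _ ≤ _ := abs_add_le _ _
      have h1 : |h (u + (t - 1)) - h u| ≤ ((n:ℝ) + 1) * ε :=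
        ih u hu (t - 1) (by linarith [Nat.cast_nonneg (α := ℝ) n]) (by linarith)
      have h2 : |h (u + t) - h (u + (t-1))| ≤ ε := by
        have := H (u + (t - 1)) (by linarith [Nat.cast_nonneg (α := ℝ) n]) 1 ⟨by norm_num, le_refl 1⟩
        have heq : u + (t - 1) + 1 = u + t := by ring
        rwa [heq] at this
      calc |h (u + t) - h u| ≤ ε + ((n:ℝ) + 1) * ε := by linarith
        _ = ((n:ℝ) + 1 + 1) * ε := by ring
    
lemma chain (h : ℝ → ℝ) (ε X : ℝ) (hε : 0 ≤ ε)
    (H : ∀ u, X ≤ u → ∀ t ∈ Icc (0:ℝ) 1, |h (u + t) - h u| ≤ ε) :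
    ∀ u v, X ≤ u → u ≤ v → |h v - h u| ≤ ε * (1 + (v - u)) := by
  intro u v hu huv
  set t := v - u with htdef
  have ht0 : 0 ≤ t := by linarith
  have hfl : t ≤ (⌊t⌋₊ : ℝ) + 1 := le_of_lt (Nat.lt_floor_add_one t)
  have := chain_step h ε X hε H ⌊t⌋₊ u hu t ht0 hfl
  have heq : u + t = v := by ring
  rw [heq] at this
  calc |h v - h u| ≤ ((⌊t⌋₊:ℝ) + 1) * ε := this
    _ ≤ (t + 1) * ε := by nlinarith [Nat.floor_le ht0]
    _ = ε * (1 + t) := by ring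

lemma potter (L : ℝ → ℝ) (hLmeas : Measurable L)
    (hLpos : ∀ x, 0 < x → 0 < L x) (hSV : SlowlyVarying L) :
    ∀ ε : ℝ, 0 < ε → ∃ X : ℝ, 1 ≤ X ∧ ∀ x y, X ≤ y → y ≤ x →
      L y ≤ exp ε * (x/y) ^ ε * L x ∧ L x ≤ exp ε * (x/y) ^ ε * L y := by
  intro ε hε
  set h : ℝ → ℝ := fun u => Real.log (L (Real.exp u)) with hh
  have hmeas : Measurable h := Real.measurable_log.comp (hLmeas.comp Real.measurable_exp)
  have hconv : ∀ t : ℝ, Tendsto (fun u => h (u + t) - h u) atTop (nhds 0) := by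
    intro t
    have h1 : Tendsto (fun x => L (Real.exp t * x) / L x) atTop (nhds 1) :=
      hSV (Real.exp t) (Real.exp_pos t)
    have h2 : Tendsto (fun x => Real.log (L (Real.exp t * x) / L x)) atTop (nhds 0) := by
      have := (Real.continuousAt_log one_ne_zero).tendsto.comp h1
      simpa [Function.comp_def] using this
    have h3 := h2.comp Real.tendsto_exp_atTop
    apply h3.congr
    intro u
    simp only [Function.comp, hh]
    rw [Real.log_div (ne_of_gt (hLpos _ (by positivity))) (ne_of_gt (hLpos _ (Real.exp_pos u)))]
    rw [Real.exp_add, mul_comm (Real.exp u) (Real.exp t)]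
  obtain ⟨X₀, hX₀⟩ := uct h hmeas hconv ε hε
  have hch := chain h ε X₀ (le_of_lt hε) hX₀
  refine ⟨max 1 (Real.exp X₀), le_max_left _ _, ?_⟩
  intro x y hy hyx
  have hy1 : (1:ℝ) ≤ y := le_trans (le_max_left _ _) hy
  have hy0 : (0:ℝ) < y := by linarith
  have hx0 : (0:ℝ) < x := by linarith
  have hyX : Real.exp X₀ ≤ y := le_trans (le_max_right _ _) hy
  have hlogy : X₀ ≤ Real.log y := by
    rw [← Real.log_exp X₀]; exact Real.log_le_log (Real.exp_pos _) hyX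
  have hloglog : Real.log y ≤ Real.log x := Real.log_le_log hy0 hyx
  have hb := hch (Real.log y) (Real.log x) hlogy hloglog
  have hhy : h (Real.log y) = Real.log (L y) := by simp [hh, Real.exp_log hy0]
  have hhx : h (Real.log x) = Real.log (L x) := by simp [hh, Real.exp_log hx0]
  rw [hhy, hhx] at hb
  have hrw : ε * (1 + (Real.log x - Real.log y)) = ε + ε * Real.log (x / y) := by
    rw [Real.log_div (ne_of_gt hx0) (ne_of_gt hy0)]; ring
  rw [hrw] at hb
  have hpow : (x/y) ^ ε = Real.exp (ε * Real.log (x/y)) := by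
    rw [Real.rpow_def_of_pos (by positivity), mul_comm]
  have habs := abs_le.1 hb
  constructor
  · have : Real.log (L y) ≤ Real.log (L x) + (ε + ε * Real.log (x/y)) := by linarith [habs.1]
    calc L y = Real.exp (Real.log (L y)) := (Real.exp_log (hLpos y hy0)).symm
      _ ≤ Real.exp (Real.log (L x) + (ε + ε * Real.log (x/y))) := Real.exp_le_exp.2 this
      _ = Real.exp ε * (x/y) ^ ε * L x := by
          rw [hpow, Real.exp_add, Real.exp_add, Real.exp_log (hLpos x hx0)]; ring
  · have : Real.log (L x) ≤ Real.log (L y) + (ε + ε * Real.log (x/y)) := by linarith [habs.2]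
    calc L x = Real.exp (Real.log (L x)) := (Real.exp_log (hLpos x hx0)).symm
      _ ≤ Real.exp (Real.log (L y) + (ε + ε * Real.log (x/y))) := Real.exp_le_exp.2 this
      _ = Real.exp ε * (x/y) ^ ε * L y := by
          rw [hpow, Real.exp_add, Real.exp_add, Real.exp_log (hLpos y hy0)]; ring

lemma integ (a : ℝ) (ha : 0 < a) (L : ℝ → ℝ) (hLmeas : Measurable L)
    (hLpos : ∀ x, 0 < x → 0 < L x)
    (hLbdd : ∀ b : ℝ, a ≤ b → ∃ M : ℝ, ∀ x ∈ Set.Icc a b, L x ≤ M) (r : ℝ) :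
    ∀ b c : ℝ, a ≤ b → b ≤ c → IntervalIntegrable (fun t => t ^ r * L t) volume b c := by
  intro b c hab hbc
  obtain ⟨M, hM⟩ := hLbdd c (le_trans hab hbc)
  rw [intervalIntegrable_iff_integrableOn_Ioc_of_le hbc]
  have hvol : volume (Ioc b c) < ⊤ := by rw [Real.volume_Ioc]; exact ENNReal.ofReal_lt_top
  refine ⟨?_, HasFiniteIntegral.restrict_of_bounded (C := (a ^ r + c ^ r) * max M 0) hvol ?_⟩
  · apply AEStronglyMeasurable.congr
      (((Real.measurable_exp.comp (Real.measurable_log.mul (measurable_const : Measurable fun _ : ℝ => r))).mul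
        hLmeas).aestronglyMeasurable)
    rw [EventuallyEq, ae_restrict_iff' measurableSet_Ioc]
    apply Eventually.of_forall
    intro t hel
    have ht : 0 < t := lt_of_lt_of_le ha (le_of_lt (lt_of_le_of_lt hab hel.1))
    rw [Real.rpow_def_of_pos ht]
    rfl
  · rw [ae_restrict_iff' measurableSet_Ioc]
    apply Eventually.of_forall
    intro t hel
    have ht0 : a < t := lt_of_le_of_lt hab hel.1
    have ht : 0 < t := lt_trans ha ht0
    have hL0 : 0 < L t := hLpos t ht
    have hLM : L t ≤ max M 0 := le_trans (hM t ⟨le_of_lt ht0, hel.2⟩) (le_max_left _ _)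
    have hpow : t ^ r ≤ a ^ r + c ^ r := by
      rcases le_or_gt 0 r with hr | hr
      · have h1 : t ^ r ≤ c ^ r := Real.rpow_le_rpow (le_of_lt ht) hel.2 hr
        have h2 : (0:ℝ) ≤ a ^ r := le_of_lt (Real.rpow_pos_of_pos ha r)
        linarith
      · have h1 : t ^ r ≤ a ^ r :=
          Real.antitoneOn_rpow_Ioi_of_exponent_nonpos (le_of_lt hr)
            (mem_Ioi.2 ha) (mem_Ioi.2 ht) (le_of_lt ht0)
        have h2 : (0:ℝ) ≤ c ^ r :=
          le_of_lt (Real.rpow_pos_of_pos (lt_of_lt_of_le ha (le_trans hab hbc)) r)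
        linarith
    have h0 : (0:ℝ) < t ^ r := Real.rpow_pos_of_pos ht r
    rw [Real.norm_eq_abs, abs_of_nonneg (mul_nonneg (le_of_lt h0) (le_of_lt hL0))]
    have h1 : (0:ℝ) < a ^ r + c ^ r :=
      add_pos (Real.rpow_pos_of_pos ha r) (Real.rpow_pos_of_pos (lt_of_lt_of_le ha (le_trans hab hbc)) r)
    nlinarith

lemma D_atTop (a : ℝ) (ha : 0 < a) (L : ℝ → ℝ) (hLmeas : Measurable L)
    (hLpos : ∀ x, 0 < x → 0 < L x)
    (hSV : ∀ c : ℝ, 0 < c → Tendsto (fun x => L (c * x) / L x) atTop (nhds 1))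
    (r : ℝ) (hr : -1 < r) :
    Tendsto (fun x => x ^ (r+1) * L x) atTop atTop := by
  set ε₁ : ℝ := (r+1)/2 with hε₁def
  have hε₁ : 0 < ε₁ := by simp only [hε₁def]; linarith
  obtain ⟨X, hX1, hX⟩ := potter L hLmeas hLpos hSV ε₁ hε₁
  set X' : ℝ := max a X with hX'def
  have hX'1 : (1:ℝ) ≤ X' := le_trans hX1 (le_max_right a X)
  have hX'0 : (0:ℝ) < X' := by linarith
  set c : ℝ := X' ^ ε₁ * L X' / Real.exp ε₁ with hcdef
  have hc : 0 < c := by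
    apply div_pos (mul_pos (Real.rpow_pos_of_pos hX'0 _) (hLpos _ hX'0)) (Real.exp_pos _)
  have hbound : ∀ x, X' ≤ x → c * x ^ ε₁ ≤ x ^ (r+1) * L x := by
    intro x hx
    have hx0 : (0:ℝ) < x := lt_of_lt_of_le hX'0 hx
    have h1 := (hX x X' (le_max_right a X) hx).1
    have hA : (0:ℝ) < x ^ ε₁ := Real.rpow_pos_of_pos hx0 _
    have hB : (0:ℝ) < X' ^ ε₁ := Real.rpow_pos_of_pos hX'0 _
    have hdiv : (x / X') ^ ε₁ = x ^ ε₁ / X' ^ ε₁ :=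
      Real.div_rpow (le_of_lt hx0) (le_of_lt hX'0) ε₁
    rw [hdiv] at h1
    have hLx : 0 < L x := hLpos x hx0
    have hLX' : 0 < L X' := hLpos _ hX'0
    have hee : (0:ℝ) < Real.exp ε₁ := Real.exp_pos _
    -- h1 : L X' ≤ exp ε₁ * (x ^ ε₁ / X' ^ ε₁) * L x
    have key : X' ^ ε₁ * L X' / Real.exp ε₁ ≤ x ^ ε₁ * L x := by
      rw [div_le_iff₀ hee]
      have h2 := mul_le_mul_of_nonneg_left h1 (le_of_lt hB)
      calc X' ^ ε₁ * L X' ≤ X' ^ ε₁ * (Real.exp ε₁ * (x ^ ε₁ / X' ^ ε₁) * L x) := h2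
        _ = x ^ ε₁ * L x * Real.exp ε₁ := by field_simp
    have hxsplit : x ^ (r+1) = x ^ ε₁ * x ^ ε₁ := by
      rw [← Real.rpow_add hx0]
      congr 1
      simp only [hε₁def]; ring
    rw [hxsplit, mul_assoc]
    calc c * x ^ ε₁ = x ^ ε₁ * c := mul_comm _ _
      _ ≤ x ^ ε₁ * (x ^ ε₁ * L x) := by
          apply mul_le_mul_of_nonneg_left _ (le_of_lt hA)
          exact key
  apply tendsto_atTop_mono' atTop (eventually_atTop.2 ⟨X', hbound⟩)
  exact (tendsto_rpow_atTop hε₁).const_mul_atTop hc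

lemma ratio_bounds (a : ℝ) (ha : 0 < a) (L : ℝ → ℝ) (hLmeas : Measurable L)
    (hLpos : ∀ x, 0 < x → 0 < L x)
    (hSV : ∀ c : ℝ, 0 < c → Tendsto (fun x => L (c * x) / L x) atTop (nhds 1))
    (hLbdd : ∀ b : ℝ, a ≤ b → ∃ M : ℝ, ∀ x ∈ Set.Icc a b, L x ≤ M)
    (r : ℝ) (hr : -1 < r) (ε : ℝ) (hε0 : 0 < ε) (hεr : ε < (r+1)/2) :
    ∀ᶠ x in atTop,
      (r+1) * (∫ t in a..x, t ^ r * L t) / (x ^ (r+1) * L x)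
          ≤ Real.exp ε * ((r+1)/(r+1-ε)) + ε ∧
      Real.exp (-ε) * ((r+1)/(r+1+ε)) * (1-ε)
          ≤ (r+1) * (∫ t in a..x, t ^ r * L t) / (x ^ (r+1) * L x) := by
  have hr1 : (0:ℝ) < r + 1 := by linarith
  have hrε : -1 < r - ε := by linarith
  have hrε1 : (0:ℝ) < r - ε + 1 := by linarith
  have hrε2 : (0:ℝ) < r + ε + 1 := by linarith
  obtain ⟨X, hX1, hX⟩ := potter L hLmeas hLpos hSV ε hε0
  set X' : ℝ := max a X with hX'def
  have haX' : a ≤ X' := le_max_left a X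
  have hXX' : X ≤ X' := le_max_right a X
  have hX'1 : (1:ℝ) ≤ X' := le_trans hX1 hXX'
  have hX'0 : (0:ℝ) < X' := by linarith
  set C : ℝ := ∫ t in a..X', t ^ r * L t with hCdef
  have hC0 : 0 ≤ C := by
    apply intervalIntegral.integral_nonneg haX'
    intro u hu
    have hu0 : 0 < u := lt_of_lt_of_le ha hu.1
    exact mul_nonneg (le_of_lt (Real.rpow_pos_of_pos hu0 r)) (le_of_lt (hLpos u hu0))
  have hD := D_atTop a ha L hLmeas hLpos hSV r hr
  have hsmall1 : Tendsto (fun x => (r+1) * C / (x ^ (r+1) * L x)) atTop (nhds 0) :=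
    Tendsto.div_atTop tendsto_const_nhds hD
  have hsmall2 : Tendsto (fun x => X' ^ (r+ε+1) * x ^ (-(r+ε+1))) atTop (nhds 0) := by
    have := (tendsto_rpow_neg_atTop hrε2).const_mul (X' ^ (r+ε+1))
    simpa using this
  have he1 : ∀ᶠ x in atTop, (r+1) * C / (x ^ (r+1) * L x) ≤ ε :=
    hsmall1.eventually (eventually_le_nhds hε0)
  have he2 : ∀ᶠ x in atTop, X' ^ (r+ε+1) * x ^ (-(r+ε+1)) ≤ ε :=
    hsmall2.eventually (eventually_le_nhds hε0)
  filter_upwards [eventually_ge_atTop X', he1, he2] with x hXx hex1 hex2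
  have hx0 : (0:ℝ) < x := lt_of_lt_of_le hX'0 hXx
  have hax : a ≤ x := le_trans haX' hXx
  have hLx : 0 < L x := hLpos x hx0
  have hxr1 : (0:ℝ) < x ^ (r+1) := Real.rpow_pos_of_pos hx0 _
  have hDx : (0:ℝ) < x ^ (r+1) * L x := mul_pos hxr1 hLx
  have hxε : (0:ℝ) < x ^ ε := Real.rpow_pos_of_pos hx0 ε
  set I : ℝ := ∫ t in X'..x, t ^ r * L t with hIdef
  have hsplit : (∫ t in a..x, t ^ r * L t) = C + I :=
    (intervalIntegral.integral_add_adjacent_intervals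
      (integ a ha L hLmeas hLpos hLbdd r a X' le_rfl haX')
      (integ a ha L hLmeas hLpos hLbdd r X' x haX' hXx)).symm
  -- pointwise bounds on [X', x]
  have hptu : ∀ t ∈ Icc X' x, t ^ r * L t ≤ (Real.exp ε * x ^ ε * L x) * t ^ (r-ε) := by
    intro t ht
    have ht0 : 0 < t := lt_of_lt_of_le hX'0 ht.1
    have htr : (0:ℝ) < t ^ r := Real.rpow_pos_of_pos ht0 r
    have htε : (0:ℝ) < t ^ ε := Real.rpow_pos_of_pos ht0 ε
    have hb1 := (hX x t (le_trans hXX' ht.1) ht.2).1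
    rw [Real.div_rpow (le_of_lt hx0) (le_of_lt ht0) ε] at hb1
    have heq : t ^ r * (Real.exp ε * (x ^ ε / t ^ ε) * L x)
        = (Real.exp ε * x ^ ε * L x) * t ^ (r-ε) := by
      rw [Real.rpow_sub ht0]
      field_simp
    calc t ^ r * L t ≤ t ^ r * (Real.exp ε * (x ^ ε / t ^ ε) * L x) :=
          mul_le_mul_of_nonneg_left hb1 (le_of_lt htr)
      _ = _ := heq
  have hptl : ∀ t ∈ Icc X' x,
      (Real.exp (-ε) * x ^ (-ε) * L x) * t ^ (r+ε) ≤ t ^ r * L t := by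
    intro t ht
    have ht0 : 0 < t := lt_of_lt_of_le hX'0 ht.1
    have hLt : 0 < L t := hLpos t ht0
    have htr : (0:ℝ) < t ^ r := Real.rpow_pos_of_pos ht0 r
    have htε : (0:ℝ) < t ^ ε := Real.rpow_pos_of_pos ht0 ε
    have hb2 := (hX x t (le_trans hXX' ht.1) ht.2).2
    rw [Real.div_rpow (le_of_lt hx0) (le_of_lt ht0) ε] at hb2
    have hmul := mul_le_mul_of_nonneg_left hb2
      (show (0:ℝ) ≤ Real.exp (-ε) * (x ^ ε)⁻¹ * t ^ ε by positivity)
    have hsimp : (Real.exp (-ε) * (x ^ ε)⁻¹ * t ^ ε) * (Real.exp ε * (x ^ ε / t ^ ε) * L t)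
        = L t := by
      rw [Real.exp_neg]
      field_simp
    rw [Real.rpow_add ht0, Real.rpow_neg (le_of_lt hx0)]
    calc Real.exp (-ε) * (x ^ ε)⁻¹ * L x * (t ^ r * t ^ ε)
        = t ^ r * ((Real.exp (-ε) * (x ^ ε)⁻¹ * t ^ ε) * L x) := by ring
      _ ≤ t ^ r * L t := by
          apply mul_le_mul_of_nonneg_left _ (le_of_lt htr)
          exact le_of_le_of_eq hmul hsimp
  -- integral bounds
  have hIu : I ≤ Real.exp ε * L x * x ^ (r+1) / (r-ε+1) := by
    have h1 : I ≤ ∫ t in X'..x, (Real.exp ε * x ^ ε * L x) * t ^ (r-ε) :=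
      intervalIntegral.integral_mono_on hXx
        (integ a ha L hLmeas hLpos hLbdd r X' x haX' hXx)
        ((intervalIntegral.intervalIntegrable_rpow' hrε).const_mul _) hptu
    rw [intervalIntegral.integral_const_mul, integral_rpow (Or.inl hrε)] at h1
    have hxpow : x ^ ε * x ^ (r-ε+1) = x ^ (r+1) := by
      rw [← Real.rpow_add hx0]; congr 1; ring
    have hX'p : (0:ℝ) < X' ^ (r-ε+1) := Real.rpow_pos_of_pos hX'0 _
    have h2 : (Real.exp ε * x ^ ε * L x) * ((x ^ (r-ε+1) - X' ^ (r-ε+1)) / (r-ε+1))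
        ≤ Real.exp ε * L x * x ^ (r+1) / (r-ε+1) := by
      rw [← mul_div_assoc, div_le_div_iff₀ hrε1 hrε1]
      have hkey : (Real.exp ε * x ^ ε * L x) * (x ^ (r-ε+1) - X' ^ (r-ε+1))
          ≤ Real.exp ε * L x * x ^ (r+1) := by
        have hpos : (0:ℝ) < Real.exp ε * L x := mul_pos (Real.exp_pos ε) hLx
        nlinarith [mul_pos hxε hX'p]
      nlinarith
    exact le_trans h1 h2
  have hIl : (Real.exp (-ε) * x ^ (-ε) * L x) * ((x ^ (r+ε+1) - X' ^ (r+ε+1)) / (r+ε+1))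
      ≤ I := by
    have h1 : (∫ t in X'..x, (Real.exp (-ε) * x ^ (-ε) * L x) * t ^ (r+ε)) ≤ I :=
      intervalIntegral.integral_mono_on hXx
        ((intervalIntegral.intervalIntegrable_rpow' (by linarith : (-1:ℝ) < r + ε)).const_mul _)
        (integ a ha L hLmeas hLpos hLbdd r X' x haX' hXx) hptl
    rw [intervalIntegral.integral_const_mul,
      integral_rpow (Or.inl (by linarith : (-1:ℝ) < r + ε))] at h1
    have : r + ε + 1 = r + ε + 1 := rfl
    exact h1
  -- final bounds
  constructor
  · -- upper bound
    have heq1 : (r+1) * (∫ t in a..x, t ^ r * L t) / (x ^ (r+1) * L x)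
        = (r+1) * C / (x ^ (r+1) * L x) + (r+1) * I / (x ^ (r+1) * L x) := by
      rw [hsplit]; ring
    rw [heq1]
    have h3 : (r+1) * I / (x ^ (r+1) * L x)
        ≤ (r+1) * (Real.exp ε * L x * x ^ (r+1) / (r-ε+1)) / (x ^ (r+1) * L x) := by
      gcongr
    have h4 : (r+1) * (Real.exp ε * L x * x ^ (r+1) / (r-ε+1)) / (x ^ (r+1) * L x)
        = Real.exp ε * ((r+1)/(r+1-ε)) := by
      have hne1 : r - ε + 1 ≠ 0 := ne_of_gt hrε1
      have hne2 : r + 1 - ε ≠ 0 := ne_of_gt (by linarith : (0:ℝ) < r + 1 - ε)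
      rw [show r + 1 - ε = r - ε + 1 by ring]
      field_simp
    linarith [h3, h4 ▸ h3, hex1]
  · -- lower bound
    have hkey : (r+1) * ((Real.exp (-ε) * x ^ (-ε) * L x)
          * ((x ^ (r+ε+1) - X' ^ (r+ε+1)) / (r+ε+1))) / (x ^ (r+1) * L x)
        = Real.exp (-ε) * ((r+1)/(r+ε+1)) * (1 - X' ^ (r+ε+1) * x ^ (-(r+ε+1))) := by
      rw [Real.rpow_neg (le_of_lt hx0) ε, Real.rpow_neg (le_of_lt hx0) (r+ε+1),
        show x ^ (r+ε+1) = x ^ (r+1) * x ^ ε by rw [← Real.rpow_add hx0]; congr 1; ring]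
      field_simp
    have h5 : Real.exp (-ε) * ((r+1)/(r+1+ε)) * (1-ε)
        ≤ Real.exp (-ε) * ((r+1)/(r+ε+1)) * (1 - X' ^ (r+ε+1) * x ^ (-(r+ε+1))) := by
      have hco : (0:ℝ) ≤ Real.exp (-ε) * ((r+1)/(r+ε+1)) := by positivity
      have : (r+1)/(r+1+ε) = (r+1)/(r+ε+1) := by ring_nf
      rw [this]
      exact mul_le_mul_of_nonneg_left (by linarith) hco
    have h6 : (r+1) * ((Real.exp (-ε) * x ^ (-ε) * L x)
          * ((x ^ (r+ε+1) - X' ^ (r+ε+1)) / (r+ε+1))) / (x ^ (r+1) * L x)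
        ≤ (r+1) * I / (x ^ (r+1) * L x) := by
      gcongr
    have h7 : (r+1) * I / (x ^ (r+1) * L x)
        ≤ (r+1) * (∫ t in a..x, t ^ r * L t) / (x ^ (r+1) * L x) := by
      gcongr
      rw [hsplit]; linarith
    calc Real.exp (-ε) * ((r+1)/(r+1+ε)) * (1-ε)
        ≤ Real.exp (-ε) * ((r+1)/(r+ε+1)) * (1 - X' ^ (r+ε+1) * x ^ (-(r+ε+1))) := h5
      _ = (r+1) * ((Real.exp (-ε) * x ^ (-ε) * L x)
            * ((x ^ (r+ε+1) - X' ^ (r+ε+1)) / (r+ε+1))) / (x ^ (r+1) * L x) := hkey.symm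
      _ ≤ (r+1) * I / (x ^ (r+1) * L x) := h6
      _ ≤ _ := h7

/-- Karamata's theorem, direct half: if `L` is positive, measurable, slowly varying at
infinity and locally bounded on `[a, ∞)`, then for `r > -1`,
`∫_a^x t^r L(t) dt ~ x^(r+1) L(x) / (r+1)` as `x → ∞`. -/
theorem karamata_direct
    (a : ℝ) (ha : 0 < a) (L : ℝ → ℝ) (hLmeas : Measurable L)
    (hLpos : ∀ x, 0 < x → 0 < L x) (hSV : SlowlyVarying L)
    (hLbdd : ∀ b : ℝ, a ≤ b → ∃ M : ℝ, ∀ x ∈ Set.Icc a b, L x ≤ M)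
    (r : ℝ) (hr : -1 < r) :
    Tendsto (fun x => (∫ t in a..x, t ^ r * L t) / (x ^ (r + 1) * L x / (r + 1)))
      atTop (nhds 1) := by
  have hr1 : (0:ℝ) < r + 1 := by linarith
  have hratio : Tendsto (fun x => (r+1) * (∫ t in a..x, t ^ r * L t) / (x ^ (r+1) * L x))
      atTop (nhds 1) := by
    rw [Metric.tendsto_nhds]
    intro δ hδ
    have hg1 : Tendsto (fun ε : ℝ => Real.exp ε * ((r+1)/(r+1-ε)) + ε) (nhds 0) (nhds 1) := by
      have hc : ContinuousAt (fun ε : ℝ => Real.exp ε * ((r+1)/(r+1-ε)) + ε) 0 := by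
        apply ContinuousAt.add ?_ continuousAt_id
        apply ContinuousAt.mul Real.continuous_exp.continuousAt
        apply ContinuousAt.div continuousAt_const (continuousAt_const.sub continuousAt_id)
        show r + 1 - 0 ≠ 0; rw [sub_zero]
        exact ne_of_gt hr1
      have h0 : Real.exp 0 * ((r+1)/(r+1-0)) + 0 = 1 := by
        rw [Real.exp_zero, sub_zero, div_self (ne_of_gt hr1)]; ring
      have ht := hc.tendsto
      rw [h0] at ht
      exact ht
    have hg2 : Tendsto (fun ε : ℝ => Real.exp (-ε) * ((r+1)/(r+1+ε)) * (1-ε))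
        (nhds 0) (nhds 1) := by
      have hc : ContinuousAt (fun ε : ℝ => Real.exp (-ε) * ((r+1)/(r+1+ε)) * (1-ε)) 0 := by
        apply ContinuousAt.mul ?_ (continuousAt_const.sub continuousAt_id)
        apply ContinuousAt.mul (Real.continuous_exp.continuousAt.comp continuousAt_id.neg)
        apply ContinuousAt.div continuousAt_const (continuousAt_const.add continuousAt_id)
        show r + 1 + 0 ≠ 0; rw [add_zero]
        exact ne_of_gt hr1
      have h0 : Real.exp (-0) * ((r+1)/(r+1+0)) * (1-0) = 1 := by
        rw [neg_zero, Real.exp_zero, add_zero, div_self (ne_of_gt hr1)]; ring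
      have ht := hc.tendsto
      rw [h0] at ht
      exact ht
    have e1 : ∀ᶠ ε in nhdsWithin (0:ℝ) (Ioi 0),
        Real.exp ε * ((r+1)/(r+1-ε)) + ε < 1 + δ :=
      ((hg1.mono_left nhdsWithin_le_nhds).eventually (eventually_lt_nhds (by linarith)))
    have e2 : ∀ᶠ ε in nhdsWithin (0:ℝ) (Ioi 0),
        1 - δ < Real.exp (-ε) * ((r+1)/(r+1+ε)) * (1-ε) :=
      ((hg2.mono_left nhdsWithin_le_nhds).eventually (eventually_gt_nhds (by linarith)))
    have e3 : ∀ᶠ ε in nhdsWithin (0:ℝ) (Ioi 0), ε < (r+1)/2 :=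
      ((eventually_lt_nhds (by linarith : (0:ℝ) < (r+1)/2)).filter_mono nhdsWithin_le_nhds)
    have e4 : ∀ᶠ ε in nhdsWithin (0:ℝ) (Ioi 0), (0:ℝ) < ε := by
      filter_upwards [self_mem_nhdsWithin] with ε hε
      exact hε
    obtain ⟨ε, he1, he2, he3, he4⟩ := (e1.and (e2.and (e3.and e4))).exists
    have hb := ratio_bounds a ha L hLmeas hLpos hSV hLbdd r hr ε he4 he3
    filter_upwards [hb] with x hx
    rw [Real.dist_eq, abs_lt]
    constructor
    · linarith [hx.2]
    · linarith [hx.1]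
  have heq : (fun x => (∫ t in a..x, t ^ r * L t) / (x ^ (r + 1) * L x / (r + 1)))
      = fun x => (r+1) * (∫ t in a..x, t ^ r * L t) / (x ^ (r+1) * L x) := by
    funext x
    rw [div_div_eq_mul_div]
    ring
  rw [heq]
  exact hratio
end

section
/- Let (p_k)_{k≥0} be nonnegative reals with Σ_k p_k = 1 and μ := Σ_k k p_k satisfying 1 < μ < ∞, and let f(s) = Σ_k p_k s^k. Let q ∈ [0,1) satisfy f(q) = q. Then f'(1) + f'(q) ≥ 2, where f'(1) = Σ_k k p_k and f'(q) = Σ_k k p_k q^{k-1}. Moreover, equality f'(1) + f'(q) = 2 holds if and only if p_k = 0 for every k ≥ 3. -/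
/-!
Write `f'(1) + f'(q) - 2 = ∑ₖ pₖ (k (1 + q^(k-1)) - 2 (1 - q^k)/(1 - q))`, using
`∑ₖ pₖ (1 - q^k) = 1 - q`. Since `(1 - q^k)/(1 - q) = ∑_{j<k} q^j`, the `k`-th bracket equals
`∑_{j<k} (1 - q^j)(1 - q^(k-1-j))`, which vanishes for `k ≤ 2` and is positive for `k ≥ 3`
(its `j = 1` term is).
-/

open Finset

noncomputable def powPairSum (q : ℝ) (k : ℕ) : ℝ :=
  ∑ j ∈ range k, (1 - q ^ j) * (1 - q ^ (k - 1 - j))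

lemma powPairSum_eq (q : ℝ) (k : ℕ) :
    powPairSum q k = k * (1 + q ^ (k - 1)) - 2 * ∑ j ∈ range k, q ^ j := by
  have hterm : ∀ j ∈ range k,
      (1 - q ^ j) * (1 - q ^ (k - 1 - j)) = 1 - q ^ (k - 1 - j) - q ^ j + q ^ (k - 1) := by
    intro j hj
    have hjk : j + (k - 1 - j) = k - 1 := by have := mem_range.mp hj; omega
    have hprod : q ^ j * q ^ (k - 1 - j) = q ^ (k - 1) := by rw [← pow_add, hjk]
    linear_combination hprod
  rw [powPairSum, sum_congr rfl hterm]
  simp only [sum_add_distrib, sum_sub_distrib, sum_const, card_range, nsmul_eq_mul,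
    sum_range_reflect (fun j => q ^ j) k]
  ring

lemma one_sub_mul_powPairSum (q : ℝ) (k : ℕ) :
    (1 - q) * powPairSum q k = (1 - q) * (k * (1 + q ^ (k - 1))) - 2 * (1 - q ^ k) := by
  rw [powPairSum_eq, ← mul_neg_geom_sum]
  ring

lemma powPairSum_nonneg {q : ℝ} (hq0 : 0 ≤ q) (hq1 : q ≤ 1) (k : ℕ) : 0 ≤ powPairSum q k :=
  sum_nonneg fun _ _ =>
    mul_nonneg (sub_nonneg.mpr (pow_le_one₀ hq0 hq1)) (sub_nonneg.mpr (pow_le_one₀ hq0 hq1))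

lemma powPairSum_pos {q : ℝ} (hq0 : 0 ≤ q) (hq1 : q < 1) {k : ℕ} (hk : 3 ≤ k) :
    0 < powPairSum q k := by
  have hterm : 0 < (1 - q ^ 1) * (1 - q ^ (k - 1 - 1)) :=
    mul_pos (sub_pos.mpr (by simpa using hq1)) (sub_pos.mpr (pow_lt_one₀ hq0 hq1 (by omega)))
  exact hterm.trans_le <| single_le_sum
    (f := fun j => (1 - q ^ j) * (1 - q ^ (k - 1 - j)))
    (fun j _ => mul_nonneg (sub_nonneg.mpr (pow_le_one₀ hq0 hq1.le))
      (sub_nonneg.mpr (pow_le_one₀ hq0 hq1.le)))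
    (mem_range.mpr (by omega : 1 < k))

lemma powPairSum_eq_zero_of_le_two (q : ℝ) {k : ℕ} (hk : k ≤ 2) : powPairSum q k = 0 := by
  interval_cases k <;> simp [powPairSum, sum_range_succ]

lemma mul_powPairSum_eq_zero_iff {q : ℝ} (hq0 : 0 ≤ q) (hq1 : q < 1) (x : ℝ) (k : ℕ) :
    x * powPairSum q k = 0 ↔ (3 ≤ k → x = 0) := by
  rcases le_or_gt 3 k with hk | hk
  · simp [hk, (powPairSum_pos hq0 hq1 hk).ne']
  · simp [powPairSum_eq_zero_of_le_two q (by omega : k ≤ 2), hk.not_ge]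

lemma hasSum_mul_powPairSum (p : ℕ → ℝ) (hp : ∀ k, 0 ≤ p k) (hpsum : Summable p)
    (hpsum1 : ∑' k, p k = 1) (hμsum : Summable fun k : ℕ => (k : ℝ) * p k)
    {q : ℝ} (hq0 : 0 ≤ q) (hq1 : q < 1) (hfq : ∑' k : ℕ, p k * q ^ k = q) :
    HasSum (fun k => p k * powPairSum q k)
      ((∑' k : ℕ, (k : ℝ) * p k) + (∑' k : ℕ, (k : ℝ) * p k * q ^ (k - 1)) - 2) := by
  have hq : 1 - q ≠ 0 := by linarith
  have hmean : ∀ k : ℕ, 0 ≤ (k : ℝ) * p k := fun k => mul_nonneg k.cast_nonneg (hp k)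
  have hderiv : Summable fun k : ℕ => (k : ℝ) * p k * q ^ (k - 1) :=
    hμsum.of_nonneg_of_le (fun k => mul_nonneg (hmean k) (pow_nonneg hq0 _))
      (fun k => mul_le_of_le_one_right (hmean k) (pow_le_one₀ hq0 hq1.le))
  have hgen : Summable fun k : ℕ => p k * q ^ k :=
    hpsum.of_nonneg_of_le (fun k => mul_nonneg (hp k) (pow_nonneg hq0 k))
      (fun k => mul_le_of_le_one_right (hp k) (pow_le_one₀ hq0 hq1.le))
  have hmass : HasSum (fun k => p k - p k * q ^ k) (1 - q) := by
    have h := hpsum.hasSum.sub hgen.hasSum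
    rwa [hpsum1, hfq] at h
  have hsum := (hμsum.hasSum.add hderiv.hasSum).sub (hmass.mul_left (2 / (1 - q)))
  rw [div_mul_cancel₀ 2 hq] at hsum
  refine hsum.congr_fun fun k => ?_
  have hk := one_sub_mul_powPairSum q k
  field_simp
  linear_combination p k * hk

theorem fprime_one_add_fprime_q_ge_two_general
    (p : ℕ → ℝ) (hp : ∀ k, 0 ≤ p k) (hpsum : Summable p) (hpsum1 : ∑' k, p k = 1)
    (hμsum : Summable fun k : ℕ => (k : ℝ) * p k)
    (q : ℝ) (hq0 : 0 ≤ q) (hq1 : q < 1) (hfq : ∑' k : ℕ, p k * q ^ k = q) :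
    2 ≤ (∑' k : ℕ, (k : ℝ) * p k) + (∑' k : ℕ, (k : ℝ) * p k * q ^ (k - 1)) ∧
    ((∑' k : ℕ, (k : ℝ) * p k) + (∑' k : ℕ, (k : ℝ) * p k * q ^ (k - 1)) = 2 ↔
      ∀ k, 3 ≤ k → p k = 0) := by
  have hsum := hasSum_mul_powPairSum p hp hpsum hpsum1 hμsum hq0 hq1 hfq
  have hnonneg : ∀ k, 0 ≤ p k * powPairSum q k :=
    fun k => mul_nonneg (hp k) (powPairSum_nonneg hq0 hq1.le k)
  refine ⟨by linarith [hsum.nonneg hnonneg], ?_⟩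
  have hzero_iff : (∑' k : ℕ, (k : ℝ) * p k) + (∑' k : ℕ, (k : ℝ) * p k * q ^ (k - 1)) - 2 = 0 ↔
      HasSum (fun k => p k * powPairSum q k) 0 :=
    ⟨fun h => h ▸ hsum, hsum.unique⟩
  rw [← sub_eq_zero, hzero_iff, hasSum_zero_iff_of_nonneg hnonneg, funext_iff]
  simp only [Pi.zero_apply, mul_powPairSum_eq_zero_iff hq0 hq1]

/-- For a supercritical offspring distribution `(p_k)` with generating function
`f(s) = ∑ p_k s^k` and fixed point `q ∈ [0,1)` of `f`, one has `f'(1) + f'(q) ≥ 2`,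
with equality iff `p_k = 0` for all `k ≥ 3`. -/
theorem fprime_one_add_fprime_q_ge_two
    (p : ℕ → ℝ) (hp : ∀ k, 0 ≤ p k) (hpsum : Summable p) (hpsum1 : ∑' k, p k = 1)
    (hμsum : Summable fun k : ℕ => (k : ℝ) * p k)
    (hμ : 1 < ∑' k : ℕ, (k : ℝ) * p k)
    (q : ℝ) (hq0 : 0 ≤ q) (hq1 : q < 1) (hfq : ∑' k : ℕ, p k * q ^ k = q) :
    2 ≤ (∑' k : ℕ, (k : ℝ) * p k) + (∑' k : ℕ, (k : ℝ) * p k * q ^ (k - 1)) ∧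
    ((∑' k : ℕ, (k : ℝ) * p k) + (∑' k : ℕ, (k : ℝ) * p k * q ^ (k - 1)) = 2 ↔
      ∀ k, 3 ≤ k → p k = 0) :=
  fprime_one_add_fprime_q_ge_two_general p hp hpsum hpsum1 hμsum q hq0 hq1 hfq
end

section
/- Let α > 0 and let L : (0,∞) → (0,∞) be continuous and slowly varying at infinity, such that φ(x) := x^{-α} L(x) is strictly decreasing on (0,∞) with φ(x) → ∞ as x → 0+ and φ(x) → 0 as x → ∞. Let H : (0,∞) → (0,∞) be the inverse function of φ, so that H(y)^{-α} L(H(y)) = y for all y > 0. Then the function L̄ : (0,∞) → (0,∞) defined by L̄(u) := H(1/u)·u^{-1/α} is slowly varying at infinity; equivalently, H(y) = y^{-1/α} L̄(1/y) for all y > 0 with L̄ slowly varying at infinity. -/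
open Filter Set Real

/-- If `φ(x) = x^(-α) L(x)` is a strictly decreasing bijection of `(0,∞)` onto `(0,∞)`
with `L` continuous, positive and slowly varying, and `H` is its inverse, then
`L̄(u) := H(1/u) u^(-1/α)` is slowly varying at infinity; equivalently
`H(y) = y^(-1/α) L̄(1/y)` with `L̄` slowly varying. -/
theorem inverse_is_regularly_varying
    (α : ℝ) (hα : 0 < α) (L : ℝ → ℝ)
    (hLcont : ContinuousOn L (Set.Ioi 0)) (hLpos : ∀ x, 0 < x → 0 < L x)
    (hSV : SlowlyVarying L)
    (hanti : StrictAntiOn (fun x => x ^ (-α) * L x) (Set.Ioi 0))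
    (hzero : Tendsto (fun x => x ^ (-α) * L x) (nhdsWithin 0 (Set.Ioi 0)) atTop)
    (hinfty : Tendsto (fun x => x ^ (-α) * L x) atTop (nhds 0))
    (H : ℝ → ℝ) (hHpos : ∀ y, 0 < y → 0 < H y)
    (hH : ∀ y, 0 < y → (H y) ^ (-α) * L (H y) = y) :
    SlowlyVarying (fun u => H (1 / u) * u ^ (-(1 / α))) := by
  intro c hc
  have hc1α : (0:ℝ) < c ^ (1/α) := Real.rpow_pos_of_pos hc _
  -- H (1/u) → ∞ as u → ∞
  have hHtop : Tendsto (fun u : ℝ => H (1/u)) atTop atTop := by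
    rw [tendsto_atTop]
    intro M
    set M' := max M 1 with hM'def
    have hM'pos : (0:ℝ) < M' := lt_of_lt_of_le one_pos (le_max_right _ _)
    have hφM' : (0:ℝ) < M' ^ (-α) * L M' :=
      mul_pos (Real.rpow_pos_of_pos hM'pos _) (hLpos _ hM'pos)
    filter_upwards [eventually_gt_atTop (max 0 (1 / (M' ^ (-α) * L M')))] with u hu
    have hu0 : 0 < u := lt_of_le_of_lt (le_max_left _ _) hu
    have h1u : 0 < 1/u := by positivity
    have h2 : 1 / (M' ^ (-α) * L M') < u := lt_of_le_of_lt (le_max_right _ _) hu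
    have hlt : 1/u < M' ^ (-α) * L M' := by
      rw [div_lt_iff₀ hu0]
      have := (div_lt_iff₀ hφM').mp h2
      linarith [this]
    have hlt' : (H (1/u)) ^ (-α) * L (H (1/u)) < M' ^ (-α) * L M' := by
      rw [hH _ h1u]; exact hlt
    have := (hanti.lt_iff_gt (mem_Ioi.mpr (hHpos _ h1u)) (mem_Ioi.mpr hM'pos)).mp hlt'
    exact le_trans (le_max_left M 1) this.le
  -- main limit : H(1/(c u)) / H(1/u) → c^(1/α)
  have hmain : Tendsto (fun u => H (1/(c*u)) / H (1/u)) atTop (nhds (c ^ (1/α))) := by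
    rw [tendsto_order]
    constructor
    · -- lower bounds
      intro a ha
      rcases le_or_gt a 0 with ha0 | ha0
      · filter_upwards [eventually_gt_atTop 0] with u hu0
        have h1u : 0 < 1/u := by positivity
        have hcu : 0 < 1/(c*u) := by positivity
        exact lt_of_le_of_lt ha0 (div_pos (hHpos _ hcu) (hHpos _ h1u))
      · -- a > 0, a < c^(1/α)
        have haα : 1/c < a ^ (-α) := by
          have h1 : a ^ α < c := by
            have h2 : a ^ α < (c ^ (1/α)) ^ α :=
              Real.rpow_lt_rpow ha0.le ha hα
            rwa [← Real.rpow_mul hc.le, one_div_mul_cancel hα.ne', Real.rpow_one] at h2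
          rw [Real.rpow_neg ha0.le, one_div]
          exact inv_strictAnti₀ (Real.rpow_pos_of_pos ha0 _) h1
        have hLa := (hSV a ha0).const_mul (a ^ (-α))
        rw [mul_one] at hLa
        have hev : ∀ᶠ x in atTop, 1/c < a ^ (-α) * (L (a*x) / L x) :=
          hLa.eventually_const_lt haα
        filter_upwards [hHtop.eventually hev, eventually_gt_atTop 0] with u hu hu0
        have h1u : 0 < 1/u := by positivity
        have hcu : 0 < 1/(c*u) := by positivity
        have hx : 0 < H (1/u) := hHpos _ h1u
        have hxc : 0 < H (1/(c*u)) := hHpos _ hcu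
        have hLx : 0 < L (H (1/u)) := hLpos _ hx
        have h1 : L (H (1/u)) / c < a ^ (-α) * L (a * H (1/u)) := by
          have h2 := mul_lt_mul_of_pos_right hu hLx
          have h3 : a ^ (-α) * (L (a * H (1/u)) / L (H (1/u))) * L (H (1/u))
              = a ^ (-α) * L (a * H (1/u)) := by field_simp
          rw [h3] at h2
          calc L (H (1/u)) / c = 1/c * L (H (1/u)) := by ring
            _ < _ := h2
        have hxα : (0:ℝ) < (H (1/u)) ^ (-α) := Real.rpow_pos_of_pos hx _
        have hφ : 1/(c*u) < (a * H (1/u)) ^ (-α) * L (a * H (1/u)) := by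
          calc 1/(c*u) = (1/u)/c := by rw [div_div, mul_comm]
            _ = ((H (1/u)) ^ (-α) * L (H (1/u))) / c := by rw [hH _ h1u]
            _ = (H (1/u)) ^ (-α) * (L (H (1/u)) / c) := by ring
            _ < (H (1/u)) ^ (-α) * (a ^ (-α) * L (a * H (1/u))) :=
                mul_lt_mul_of_pos_left h1 hxα
            _ = (a * H (1/u)) ^ (-α) * L (a * H (1/u)) := by
                rw [Real.mul_rpow ha0.le hx.le]; ring
        have hax : 0 < a * H (1/u) := mul_pos ha0 hx
        have hφ' : (H (1/(c*u))) ^ (-α) * L (H (1/(c*u))) <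
            (a * H (1/u)) ^ (-α) * L (a * H (1/u)) := by
          rw [hH _ hcu]; exact hφ
        have hlt := (hanti.lt_iff_gt (mem_Ioi.mpr hxc) (mem_Ioi.mpr hax)).mp hφ'
        exact (lt_div_iff₀ hx).mpr hlt
    · -- upper bounds
      intro b hb
      have hb0 : 0 < b := hc1α.trans hb
      have hbα : b ^ (-α) < 1/c := by
        have h1 : c < b ^ α := by
          have h2 : (c ^ (1/α)) ^ α < b ^ α :=
            Real.rpow_lt_rpow hc1α.le hb hα
          rwa [← Real.rpow_mul hc.le, one_div_mul_cancel hα.ne', Real.rpow_one] at h2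
        rw [Real.rpow_neg hb0.le, one_div]
        exact inv_strictAnti₀ hc h1
      have hLb := (hSV b hb0).const_mul (b ^ (-α))
      rw [mul_one] at hLb
      have hev : ∀ᶠ x in atTop, b ^ (-α) * (L (b*x) / L x) < 1/c :=
        hLb.eventually_lt_const hbα
      filter_upwards [hHtop.eventually hev, eventually_gt_atTop 0] with u hu hu0
      have h1u : 0 < 1/u := by positivity
      have hcu : 0 < 1/(c*u) := by positivity
      have hx : 0 < H (1/u) := hHpos _ h1u
      have hxc : 0 < H (1/(c*u)) := hHpos _ hcu
      have hLx : 0 < L (H (1/u)) := hLpos _ hx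
      have h1 : b ^ (-α) * L (b * H (1/u)) < L (H (1/u)) / c := by
        have h2 := mul_lt_mul_of_pos_right hu hLx
        have h3 : b ^ (-α) * (L (b * H (1/u)) / L (H (1/u))) * L (H (1/u))
            = b ^ (-α) * L (b * H (1/u)) := by field_simp
        rw [h3] at h2
        calc b ^ (-α) * L (b * H (1/u)) < 1/c * L (H (1/u)) := h2
          _ = L (H (1/u)) / c := by ring
      have hxα : (0:ℝ) < (H (1/u)) ^ (-α) := Real.rpow_pos_of_pos hx _
      have hφ : (b * H (1/u)) ^ (-α) * L (b * H (1/u)) < 1/(c*u) := by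
        calc (b * H (1/u)) ^ (-α) * L (b * H (1/u))
            = (H (1/u)) ^ (-α) * (b ^ (-α) * L (b * H (1/u))) := by
              rw [Real.mul_rpow hb0.le hx.le]; ring
          _ < (H (1/u)) ^ (-α) * (L (H (1/u)) / c) := mul_lt_mul_of_pos_left h1 hxα
          _ = ((H (1/u)) ^ (-α) * L (H (1/u))) / c := by ring
          _ = (1/u)/c := by rw [hH _ h1u]
          _ = 1/(c*u) := by rw [div_div, mul_comm]
      have hbx : 0 < b * H (1/u) := mul_pos hb0 hx
      have hφ' : (b * H (1/u)) ^ (-α) * L (b * H (1/u)) <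
          (H (1/(c*u))) ^ (-α) * L (H (1/(c*u))) := by
        rw [hH _ hcu]; exact hφ
      have hlt := (hanti.lt_iff_gt (mem_Ioi.mpr hbx) (mem_Ioi.mpr hxc)).mp hφ'
      exact (div_lt_iff₀ hx).mpr hlt
  -- assemble
  have hfinal := hmain.mul_const (c ^ (-(1/α)))
  have hone : c ^ (1/α) * c ^ (-(1/α)) = 1 := by
    rw [← Real.rpow_add hc]; simp
  rw [hone] at hfinal
  refine hfinal.congr' ?_
  filter_upwards [eventually_gt_atTop 0] with u hu0
  have h1u : 0 < 1/u := by positivity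
  have hcu : 0 < 1/(c*u) := by positivity
  have hx : 0 < H (1/u) := hHpos _ h1u
  have huα : (0:ℝ) < u ^ (-(1/α)) := Real.rpow_pos_of_pos hu0 _
  show H (1/(c*u)) / H (1/u) * c ^ (-(1/α)) =
      H (1/(c*u)) * (c*u) ^ (-(1/α)) / (H (1/u) * u ^ (-(1/α)))
  rw [Real.mul_rpow hc.le hu0.le]
  field_simp
end

section
/- Let α > 0 and r ∈ ℝ, and let x_0 > 1 be such that φ(x) := x^{-α}(log x)^r is strictly decreasing on (x_0, ∞), with y_0 := φ(x_0). Let H : (0, y_0) → (x_0, ∞) be the inverse function of φ, i.e. H(y)^{-α}(log H(y))^r = y. Then H(y) is asymptotically equivalent to α^{-r/α} · y^{-1/α} · (log(1/y))^{r/α} as y → 0+, i.e. the ratio of the two quantities tends to 1. -/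
open Filter Set Real

/-- Explicit asymptotic inversion of `φ(x) = x^(-α) (log x)^r`: if `H` inverts `φ` on
`(0, φ(x0))` with values in `(x0, ∞)`, then
`H(y) ~ α^(-r/α) y^(-1/α) (log(1/y))^(r/α)` as `y → 0+`. -/
theorem inverse_log_power_asymptotics
    (α r : ℝ) (hα : 0 < α) (x0 : ℝ) (hx0 : 1 < x0)
    (hanti : StrictAntiOn (fun x => x ^ (-α) * Real.log x ^ r) (Set.Ioi x0))
    (H : ℝ → ℝ)
    (hH : ∀ y : ℝ, 0 < y → y < x0 ^ (-α) * Real.log x0 ^ r →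
      x0 < H y ∧ (H y) ^ (-α) * Real.log (H y) ^ r = y) :
    Tendsto (fun y =>
        H y / (α ^ (-r / α) * y ^ (-(1 / α)) * Real.log (1 / y) ^ (r / α)))
      (nhdsWithin 0 (Set.Ioi 0)) (nhds 1) := by
  have hα0 : α ≠ 0 := hα.ne'
  set c : ℝ := r / α with hc
  have hlx0 : 0 < Real.log x0 := Real.log_pos hx0
  have hx0pos : (0:ℝ) < x0 := lt_trans one_pos hx0
  have hy0 : 0 < x0 ^ (-α) * Real.log x0 ^ r :=
    mul_pos (Real.rpow_pos_of_pos hx0pos _) (Real.rpow_pos_of_pos hlx0 _)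
  -- H → ∞ as y → 0⁺
  have hHtop : Tendsto H (nhdsWithin 0 (Set.Ioi 0)) atTop := by
    rw [tendsto_atTop]
    intro M
    set M' := max M (x0 + 1) with hM'
    have hM'x0 : x0 < M' := lt_of_lt_of_le (by linarith) (le_max_right _ _)
    have hM'pos : 0 < M' := lt_trans hx0pos hM'x0
    have hφ : 0 < M' ^ (-α) * Real.log M' ^ r :=
      mul_pos (Real.rpow_pos_of_pos hM'pos _)
        (Real.rpow_pos_of_pos (Real.log_pos (lt_trans hx0 hM'x0)) _)
    have hmem : Set.Ioo (0:ℝ)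
        (min (M' ^ (-α) * Real.log M' ^ r) (x0 ^ (-α) * Real.log x0 ^ r)) ∈
        nhdsWithin (0:ℝ) (Set.Ioi 0) :=
      Ioo_mem_nhdsGT_of_mem ⟨le_refl 0, lt_min hφ hy0⟩
    filter_upwards [hmem] with y hy
    obtain ⟨hy1, hy2⟩ := hy
    obtain ⟨hxgt, hxeq⟩ := hH y hy1 (lt_of_lt_of_le hy2 (min_le_right _ _))
    by_contra h
    push_neg at h
    have hlt : H y < M' := lt_of_lt_of_le h (le_max_left _ _)
    have := hanti (Set.mem_Ioi.2 hxgt) (Set.mem_Ioi.2 hM'x0) hlt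
    simp only at this
    rw [hxeq] at this
    have := lt_of_lt_of_le hy2 (min_le_left _ _)
    linarith
  -- log log / log → 0
  have hq : Tendsto (fun x => Real.log (Real.log x) / Real.log x) atTop (nhds 0) :=
    (Real.isLittleO_log_id_atTop.tendsto_div_nhds_zero).comp Real.tendsto_log_atTop
  have h2 : Tendsto (fun x => 1 - c * (Real.log (Real.log x) / Real.log x)) atTop
      (nhds 1) := by
    have h := Tendsto.sub
      (tendsto_const_nhds : Tendsto (fun _ : ℝ => (1:ℝ)) atTop (nhds 1))
      (hq.const_mul c)
    simpa using h
  -- base ratio → 1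
  have hbase : Tendsto
      (fun x => Real.log x / (Real.log x - c * Real.log (Real.log x))) atTop (nhds 1) := by
    have h3 : Tendsto (fun x => (1 - c * (Real.log (Real.log x) / Real.log x))⁻¹)
        atTop (nhds 1) := by
      simpa using h2.inv₀ one_ne_zero
    refine h3.congr' ?_
    filter_upwards [eventually_gt_atTop (Real.exp 1)] with x hx
    have hL : 0 < Real.log x := by
      have : 1 < Real.log x := (Real.lt_log_iff_exp_lt (lt_trans (Real.exp_pos 1) hx)).2 hx
      linarith
    have hL0 : Real.log x ≠ 0 := hL.ne'
    have key : Real.log x - c * Real.log (Real.log x)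
        = Real.log x * (1 - c * (Real.log (Real.log x) / Real.log x)) := by
      field_simp
    rw [key, ← div_div, div_self hL0, one_div]
  -- eventual positivity of the denominator log x - c log log x
  have hwpos : ∀ᶠ x in atTop, 0 < Real.log x - c * Real.log (Real.log x) := by
    filter_upwards [eventually_gt_atTop (Real.exp 1),
      h2.eventually (eventually_gt_nhds (by norm_num : (0:ℝ) < 1))] with x hx hx2
    have hL : 0 < Real.log x := by
      have : 1 < Real.log x := (Real.lt_log_iff_exp_lt (lt_trans (Real.exp_pos 1) hx)).2 hx
      linarith
    have key : Real.log x - c * Real.log (Real.log x)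
        = Real.log x * (1 - c * (Real.log (Real.log x) / Real.log x)) := by
      field_simp
    rw [key]
    exact mul_pos hL hx2
  have hg : Tendsto
      (fun x => (Real.log x / (Real.log x - c * Real.log (Real.log x))) ^ c)
      atTop (nhds 1) := by
    have h := hbase.rpow_const (p := c) (Or.inl one_ne_zero)
    simpa using h
  have hcomp : Tendsto
      (fun y => (Real.log (H y) /
        (Real.log (H y) - c * Real.log (Real.log (H y)))) ^ c)
      (nhdsWithin 0 (Set.Ioi 0)) (nhds 1) := hg.comp hHtop
  refine hcomp.congr' ?_
  have hmem : Set.Ioo (0:ℝ) (x0 ^ (-α) * Real.log x0 ^ r) ∈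
      nhdsWithin (0:ℝ) (Set.Ioi 0) :=
    Ioo_mem_nhdsGT_of_mem ⟨le_refl 0, hy0⟩
  filter_upwards [hmem, hHtop.eventually hwpos] with y hy hwy
  obtain ⟨hy1, hy2⟩ := hy
  obtain ⟨hxgt, hxeq⟩ := hH y hy1 hy2
  set x := H y with hxdef
  have hx1 : 1 < x := hx0.trans hxgt
  have hxp : 0 < x := lt_trans one_pos hx1
  have hlx : 0 < Real.log x := Real.log_pos hx1
  have hlogy : Real.log y = -α * Real.log x + r * Real.log (Real.log x) := by
    rw [← hxeq, Real.log_mul (Real.rpow_pos_of_pos hxp _).ne'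
      (Real.rpow_pos_of_pos hlx _).ne', Real.log_rpow hxp, Real.log_rpow hlx]
  have hlog1y : Real.log (1/y) = α * (Real.log x - c * Real.log (Real.log x)) := by
    rw [one_div, Real.log_inv, hlogy, hc]
    field_simp
    ring
  have hypow : y ^ (-(1/α)) = x * Real.log x ^ (-c) := by
    rw [← hxeq, Real.mul_rpow (Real.rpow_pos_of_pos hxp _).le
      (Real.rpow_pos_of_pos hlx _).le, ← Real.rpow_mul hxp.le, ← Real.rpow_mul hlx.le]
    congr 1
    · rw [show -α * -(1/α) = 1 by field_simp, Real.rpow_one]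
    · congr 1
      rw [hc]; field_simp
  have hlog1ypow : Real.log (1/y) ^ c
      = α ^ c * (Real.log x - c * Real.log (Real.log x)) ^ c := by
    rw [hlog1y, Real.mul_rpow hα.le hwy.le]
  have hrc : -r / α = -c := by rw [hc]; ring
  rw [hypow, hlog1ypow, Real.div_rpow hlx.le hwy.le, hrc,
    Real.rpow_neg hα.le, Real.rpow_neg hlx.le]
  have h1 : (α ^ c) ≠ 0 := (Real.rpow_pos_of_pos hα _).ne'
  have h2' : (Real.log x ^ c) ≠ 0 := (Real.rpow_pos_of_pos hlx _).ne'
  have h3 : ((Real.log x - c * Real.log (Real.log x)) ^ c) ≠ 0 :=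
    (Real.rpow_pos_of_pos hwy _).ne'
  field_simp
end

section
/- Let α > 0 and let L : (0,∞) → (0,∞) be measurable and slowly varying at infinity. Then there exists a continuous function L̃ : (0,∞) → (0,∞), slowly varying at infinity, such that L̃(x)/L(x) → 1 as x → ∞, the limit lim_{x→0+} L̃(x) exists and lies in (0,∞), and the function x ↦ x^{-α} L̃(x) is strictly decreasing on (0,∞). -/
open Filter Set Real MeasureTheory
open scoped ENNReal

private 
lemma my_uct (h : ℝ → ℝ) (hmeas : Measurable h)
    (hpt : ∀ v : ℝ, Tendsto (fun u => h (u + v) - h u) atTop (nhds 0))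
    {ε : ℝ} (hε : 0 < ε) :
    ∃ U : ℝ, ∀ u ≥ U, ∀ v ∈ Icc (0:ℝ) 1, |h (u + v) - h u| ≤ ε := by
  by_contra hcon
  push_neg at hcon
  have hseq : ∀ n : ℕ, ∃ uu : ℝ, (n : ℝ) ≤ uu ∧ ∃ vv ∈ Icc (0:ℝ) 1, ε < |h (uu + vv) - h uu| := by
    intro n
    obtain ⟨uu, huu, vv, hvv, hb⟩ := hcon n
    exact ⟨uu, huu, vv, hvv, hb⟩
  choose u hun v hv hbad using hseq
  have hutop : Tendsto u atTop atTop :=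
    tendsto_atTop_mono hun tendsto_natCast_atTop_atTop
  set w : ℕ → ℝ := fun n => u n + v n with hw
  have hwtop : Tendsto w atTop atTop := by
    apply tendsto_atTop_mono (fun n => ?_) hutop
    have := (hv n).1
    simp only [hw]; linarith
  set S : (ℕ → ℝ) → ℕ → Set ℝ := fun b n =>
    Icc (0:ℝ) 2 ∩ ⋂ (m : ℕ) (_ : n ≤ m), {t | |h (b m + t) - h (b m)| ≤ ε / 3} with hS
  have hSsub : ∀ b n, S b n ⊆ Icc (0:ℝ) 2 := fun b n => inter_subset_left
  have hSmeas : ∀ b n, MeasurableSet (S b n) := by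
    intro b n
    apply measurableSet_Icc.inter
    refine MeasurableSet.iInter fun m => MeasurableSet.iInter fun _ => ?_
    exact measurableSet_le
      (((hmeas.comp (measurable_const.add measurable_id)).sub measurable_const).abs)
      measurable_const
  have hSmono : ∀ b, Monotone (S b) := by
    intro b n n' hnn'
    apply inter_subset_inter_right
    exact biInter_subset_biInter_left fun m hm => le_trans hnn' hm
  have hSprop : ∀ b n m, n ≤ m → ∀ t ∈ S b n, |h (b m + t) - h (b m)| ≤ ε / 3 := by
    intro b n m hnm t ht
    exact mem_iInter.mp (mem_iInter.mp ht.2 m) hnm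
  have hSunion : ∀ b : ℕ → ℝ, Tendsto b atTop atTop → (⋃ n, S b n) = Icc (0:ℝ) 2 := by
    intro b hb
    refine Subset.antisymm (iUnion_subset fun n => hSsub b n) fun t ht => ?_
    have h1 : Tendsto (fun m => h (b m + t) - h (b m)) atTop (nhds 0) := (hpt t).comp hb
    obtain ⟨N, hN⟩ := Metric.tendsto_atTop.mp h1 (ε/3) (by linarith)
    refine mem_iUnion.mpr ⟨N, ht, ?_⟩
    refine mem_iInter.mpr fun m => mem_iInter.mpr fun hm => ?_
    have := hN m hm
    rw [Real.dist_eq, sub_zero] at this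
    exact this.le
  have hvol : ∀ b : ℕ → ℝ, Tendsto b atTop atTop → ∃ n, (3/2 : ℝ≥0∞) < volume (S b n) := by
    intro b hb
    have htv := tendsto_measure_iUnion_atTop (μ := volume) (hSmono b)
    rw [hSunion b hb, Real.volume_Icc] at htv
    have h2 : (3/2 : ℝ≥0∞) < ENNReal.ofReal (2 - 0) := by
      rw [show (2:ℝ) - 0 = 2 by norm_num, ENNReal.ofReal_ofNat]
      rw [ENNReal.div_lt_iff (by norm_num) (by norm_num)]
      norm_num
    exact (htv.eventually (eventually_gt_nhds h2)).exists
  obtain ⟨nE, hnE⟩ := hvol u hutop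
  obtain ⟨nF, hnF⟩ := hvol w hwtop
  set m := max nE nF with hm
  set A := S u m with hA
  set B := (fun t : ℝ => -v m + t) ⁻¹' (S w m) with hB
  have hvolA : (3/2 : ℝ≥0∞) < volume A :=
    lt_of_lt_of_le hnE (measure_mono (hSmono u (le_max_left _ _)))
  have hvolB : (3/2 : ℝ≥0∞) < volume B := by
    rw [hB, measure_preimage_add]
    exact lt_of_lt_of_le hnF (measure_mono (hSmono w (le_max_right _ _)))
  have hAsub : A ⊆ Icc (0:ℝ) 3 :=
    (hSsub u m).trans (Icc_subset_Icc le_rfl (by norm_num))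
  have hBsub : B ⊆ Icc (0:ℝ) 3 := by
    intro t ht
    have h1 : -v m + t ∈ Icc (0:ℝ) 2 := hSsub w m ht
    have h2 := (hv m).1
    have h3 := (hv m).2
    constructor
    · have := h1.1; linarith
    · have := h1.2; linarith
  have hne : (A ∩ B).Nonempty := by
    by_contra hemp
    rw [not_nonempty_iff_eq_empty] at hemp
    have hdisj : Disjoint A B := disjoint_iff_inter_eq_empty.mpr hemp
    have h1 : volume (A ∪ B) = volume A + volume B :=
      measure_union hdisj (by
        have : MeasurableSet (S w m) := hSmeas w m
        exact this.preimage (measurable_const.add measurable_id))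
    have h2 : volume (A ∪ B) ≤ volume (Icc (0:ℝ) 3) :=
      measure_mono (union_subset hAsub hBsub)
    rw [Real.volume_Icc] at h2
    have h3 : (3:ℝ≥0∞) < volume A + volume B := by
      calc (3:ℝ≥0∞) = 3/2 + 3/2 := by
            rw [ENNReal.div_add_div_same]
            rw [show (3:ℝ≥0∞) + 3 = 6 by norm_num]
            rw [ENNReal.eq_div_iff (by norm_num) (by norm_num)]
            norm_num
        _ < volume A + volume B := ENNReal.add_lt_add hvolA hvolB
    rw [h1] at h2
    have h4 : ENNReal.ofReal (3 - 0) = (3:ℝ≥0∞) := by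
      rw [show (3:ℝ) - 0 = 3 by norm_num, ENNReal.ofReal_ofNat]
    rw [h4] at h2
    exact absurd (lt_of_lt_of_le h3 h2) (lt_irrefl _)
  obtain ⟨t, htA, htB⟩ := hne
  have e1 : |h (u m + t) - h (u m)| ≤ ε / 3 := hSprop u m m le_rfl t htA
  have e2 : |h (w m + (-v m + t)) - h (w m)| ≤ ε / 3 := hSprop w m m le_rfl _ htB
  have e3 : w m + (-v m + t) = u m + t := by simp only [hw]; ring
  rw [e3] at e2
  have := hbad m
  have : ε < |h (u m + v m) - h (u m)| := hbad m
  have tri : |h (u m + v m) - h (u m)| ≤ |h (u m + t) - h (u m + v m)| + |h (u m + t) - h (u m)| := by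
    have : h (u m + v m) - h (u m) = -(h (u m + t) - h (u m + v m)) + (h (u m + t) - h (u m)) := by ring
    rw [this]
    exact le_trans (abs_add_le _ _) (by rw [abs_neg])
  have e2' : |h (u m + t) - h (u m + v m)| ≤ ε / 3 := by
    have : h (u m + t) - h (u m + v m) = h (u m + t) - h (w m) := by simp only [hw]
    rw [this]
    exact e2
  linarith


private lemma my_chain (h : ℝ → ℝ) {U ε : ℝ} (hε : 0 ≤ ε)
    (hU : ∀ u ≥ U, ∀ v ∈ Icc (0:ℝ) 1, |h (u + v) - h u| ≤ ε) :
    ∀ u ≥ U, ∀ v ≥ (0:ℝ), h (u + v) - h u ≤ ε * (v + 1) := by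
  have key : ∀ n : ℕ, ∀ u ≥ U, ∀ v : ℝ, 0 ≤ v → v ≤ n + 1 → h (u + v) - h u ≤ ε * (n + 1) := by
    intro n
    induction n with
    | zero =>
      intro u hu v hv0 hv1
      have := hU u hu v ⟨hv0, by push_cast at hv1; linarith⟩
      push_cast
      calc h (u + v) - h u ≤ |h (u + v) - h u| := le_abs_self _
        _ ≤ ε := this
        _ = ε * (0 + 1) := by ring
    | succ n ih =>
      intro u hu v hv0 hv1
      by_cases hcase : v ≤ n + 1
      · calc h (u + v) - h u ≤ ε * (n + 1) := ih u hu v hv0 hcase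
          _ ≤ ε * (↑(n+1) + 1) := by
            push_cast
            nlinarith
      · push_neg at hcase
        have h1 : h (u + 1) - h u ≤ ε := by
          have := hU u hu 1 ⟨zero_le_one, le_rfl⟩
          calc h (u + 1) - h u ≤ |h (u + 1) - h u| := le_abs_self _
            _ ≤ ε := this
        have h2 : h ((u + 1) + (v - 1)) - h (u + 1) ≤ ε * (n + 1) := by
          apply ih (u + 1) (by linarith) (v - 1) (by linarith)
          push_cast at hv1 ⊢
          linarith
        have h3 : (u + 1) + (v - 1) = u + v := by ring
        rw [h3] at h2
        push_cast
        push_cast at h2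
        linarith
  intro u hu v hv
  have h1 : v ≤ (⌊v⌋₊ : ℝ) + 1 := le_of_lt (Nat.lt_floor_add_one v)
  have h2 := key ⌊v⌋₊ u hu v hv h1
  have h3 : (⌊v⌋₊ : ℝ) ≤ v := Nat.floor_le hv
  nlinarith

private lemma my_potter (α : ℝ) (hα : 0 < α) (L : ℝ → ℝ) (hLmeas : Measurable L)
    (hLpos : ∀ x, 0 < x → 0 < L x)
    (hSV : ∀ c : ℝ, 0 < c → Tendsto (fun x => L (c * x) / L x) atTop (nhds 1))
    {ε : ℝ} (hε : 0 < ε) :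
    ∃ X : ℝ, 1 ≤ X ∧ ∀ x y : ℝ, X ≤ x → x ≤ y →
      y ^ (-α) * L y ≤ Real.exp ε * (x ^ (-α) * L x) := by
  set h : ℝ → ℝ := fun u => Real.log (L (Real.exp u)) with hh
  have hmeas : Measurable h := Real.measurable_log.comp (hLmeas.comp Real.measurable_exp)
  have hpt : ∀ v : ℝ, Tendsto (fun u => h (u + v) - h u) atTop (nhds 0) := by
    intro v
    have h1 : Tendsto (fun u => L (Real.exp v * Real.exp u) / L (Real.exp u)) atTop (nhds 1) :=
      (hSV (Real.exp v) (Real.exp_pos v)).comp Real.tendsto_exp_atTop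
    have h2 : Tendsto (fun u => Real.log (L (Real.exp v * Real.exp u) / L (Real.exp u)))
        atTop (nhds 0) := by
      have := (Real.continuousAt_log one_ne_zero).tendsto.comp h1
      simpa [Real.log_one, Function.comp_def] using this
    apply h2.congr
    intro u
    have e1 : Real.exp (u + v) = Real.exp v * Real.exp u := by
      rw [Real.exp_add]; ring
    rw [Real.log_div (ne_of_gt (hLpos _ (by positivity))) (ne_of_gt (hLpos _ (Real.exp_pos u)))]
    rw [hh]
    simp only [e1]
  set ε' : ℝ := min ε α with hε'
  have hε'pos : 0 < ε' := lt_min hε hα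
  obtain ⟨U, hU⟩ := my_uct h hmeas hpt hε'pos
  have hchain := my_chain h hε'pos.le hU
  refine ⟨max 1 (Real.exp U), le_max_left _ _, ?_⟩
  intro x y hXx hxy
  have hx1 : (1:ℝ) ≤ x := le_trans (le_max_left _ _) hXx
  have hxpos : 0 < x := lt_of_lt_of_le one_pos hx1
  have hypos : 0 < y := lt_of_lt_of_le hxpos hxy
  have hlogxU : U ≤ Real.log x := by
    have : Real.exp U ≤ x := le_trans (le_max_right _ _) hXx
    calc U = Real.log (Real.exp U) := (Real.log_exp U).symm
      _ ≤ Real.log x := Real.log_le_log (Real.exp_pos U) this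
  have hv : 0 ≤ Real.log y - Real.log x := by
    have := Real.log_le_log hxpos hxy
    linarith
  have hc := hchain (Real.log x) hlogxU (Real.log y - Real.log x) hv
  rw [show Real.log x + (Real.log y - Real.log x) = Real.log y by ring] at hc
  have hhx : h (Real.log x) = Real.log (L x) := by rw [hh]; simp [Real.exp_log hxpos]
  have hhy : h (Real.log y) = Real.log (L y) := by rw [hh]; simp [Real.exp_log hypos]
  rw [hhx, hhy] at hc
  -- now conclude via logs
  have hlhs : 0 < y ^ (-α) * L y := by
    have := hLpos y hypos
    positivity
  have hrhs : 0 < Real.exp ε * (x ^ (-α) * L x) := by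
    have := hLpos x hxpos
    positivity
  have hLx := hLpos x hxpos
  have hLy := hLpos y hypos
  rw [← Real.exp_log hlhs, ← Real.exp_log hrhs]
  apply Real.exp_le_exp.mpr
  rw [Real.log_mul (by positivity) (ne_of_gt (hLpos y hypos)),
    Real.log_mul (ne_of_gt (Real.exp_pos ε)) (ne_of_gt (by positivity)),
    Real.log_mul (by positivity) (ne_of_gt (hLpos x hxpos)),
    Real.log_exp, Real.log_rpow hypos, Real.log_rpow hxpos]
  have h1 : ε' ≤ ε := min_le_left _ _
  have h2 : ε' ≤ α := min_le_right _ _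
  nlinarith [hv, hc]

/-- Any positive, measurable, slowly varying function `L` admits a continuous, slowly
varying modification `L̃` with `L̃/L → 1` at infinity, a finite positive limit at `0+`,
and such that `x ↦ x^(-α) L̃(x)` is strictly decreasing on `(0,∞)`. -/
theorem exists_nice_slowly_varying_version
    (α : ℝ) (hα : 0 < α)
    (L : ℝ → ℝ) (hLmeas : Measurable L) (hLpos : ∀ x, 0 < x → 0 < L x)
    (hSV : SlowlyVarying L) :
    ∃ Lt : ℝ → ℝ,
      ContinuousOn Lt (Set.Ioi 0) ∧
      (∀ x, 0 < x → 0 < Lt x) ∧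
      SlowlyVarying Lt ∧
      Tendsto (fun x => Lt x / L x) atTop (nhds 1) ∧
      (∃ l : ℝ, 0 < l ∧ Tendsto Lt (nhdsWithin 0 (Set.Ioi 0)) (nhds l)) ∧
      StrictAntiOn (fun x => x ^ (-α) * Lt x) (Set.Ioi 0) := by
  classical
  set f : ℝ → ℝ := fun x => x ^ (-α) * L x with hf
  have hfpos : ∀ x, 0 < x → 0 < f x := by
    intro x hx
    have := hLpos x hx
    simp only [hf]
    positivity
  obtain ⟨X₁, hX₁1, hX₁⟩ := my_potter α hα L hLmeas hLpos hSV one_pos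
  have hX₁pos : (0:ℝ) < X₁ := lt_of_lt_of_le one_pos hX₁1
  set g : ℝ → ℝ := fun x => sSup (f '' Ici x) with hg
  have hne : ∀ x : ℝ, (f '' Ici x).Nonempty := fun x => ⟨f x, mem_image_of_mem f self_mem_Ici⟩
  have hbdd : ∀ x, X₁ ≤ x → BddAbove (f '' Ici x) := by
    intro x hx
    refine ⟨Real.exp 1 * f x, ?_⟩
    rintro _ ⟨y, hy, rfl⟩
    exact hX₁ x y hx hy
  have hfg : ∀ x, X₁ ≤ x → f x ≤ g x := fun x hx =>
    le_csSup (hbdd x hx) ⟨x, self_mem_Ici, rfl⟩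
  have hgpos : ∀ x, X₁ ≤ x → 0 < g x := fun x hx =>
    lt_of_lt_of_le (hfpos x (lt_of_lt_of_le hX₁pos hx)) (hfg x hx)
  have hganti : AntitoneOn g (Ici X₁) := by
    intro x hx y hy hxy
    exact csSup_le_csSup (hbdd x hx) (hne y) (image_mono (f := f) (Ici_subset_Ici.mpr hxy))
  have hgle : ∀ ε : ℝ, 0 < ε → ∃ X, X₁ ≤ X ∧ ∀ x, X ≤ x → g x ≤ Real.exp ε * f x := by
    intro ε hε
    obtain ⟨X', hX'1, hX'⟩ := my_potter α hα L hLmeas hLpos hSV hε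
    refine ⟨max X₁ X', le_max_left _ _, fun x hx => ?_⟩
    apply csSup_le (hne x)
    rintro _ ⟨y, hy, rfl⟩
    exact hX' x y (le_trans (le_max_right _ _) hx) hy
  have hgf : Tendsto (fun x => g x / f x) atTop (nhds 1) := by
    rw [Metric.tendsto_atTop]
    intro ε hε
    have hδ : 0 < Real.log (1 + ε/2) := Real.log_pos (by linarith)
    obtain ⟨X, hXX₁, hX⟩ := hgle _ hδ
    refine ⟨X, fun x hx => ?_⟩
    have hx1 : X₁ ≤ x := le_trans hXX₁ hx
    have hfx : 0 < f x := hfpos x (lt_of_lt_of_le hX₁pos hx1)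
    have h1 : 1 ≤ g x / f x := (one_le_div hfx).mpr (hfg x hx1)
    have h2 : g x / f x ≤ 1 + ε/2 := by
      rw [div_le_iff₀ hfx]
      have := hX x hx
      rwa [Real.exp_log (by linarith)] at this
    rw [Real.dist_eq]
    rw [abs_of_nonneg (by linarith)]
    linarith
  have hfratio : ∀ c : ℝ, 0 < c → Tendsto (fun x => f (c*x) / f x) atTop (nhds (c ^ (-α))) := by
    intro c hc
    have h1 : Tendsto (fun x => c ^ (-α) * (L (c*x) / L x)) atTop (nhds (c^(-α) * 1)) :=
      tendsto_const_nhds.mul (hSV c hc)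
    rw [mul_one] at h1
    apply h1.congr'
    filter_upwards [eventually_gt_atTop 0] with x hx
    have hLx := (hLpos x hx).ne'
    have hxa : x ^ (-α) ≠ 0 := by positivity
    simp only [hf]
    rw [Real.mul_rpow hc.le hx.le]
    field_simp
  have hmul : ∀ c : ℝ, 0 < c → Tendsto (fun x : ℝ => c * x) atTop atTop :=
    fun c hc => tendsto_id.const_mul_atTop hc
  have hfginv : Tendsto (fun x => f x / g x) atTop (nhds 1) := by
    have := hgf.inv₀ one_ne_zero
    rw [inv_one] at this
    apply this.congr
    intro x
    rw [inv_div]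
  have hgratio : ∀ c : ℝ, 0 < c → Tendsto (fun x => g (c*x)/g x) atTop (nhds (c ^ (-α))) := by
    intro c hc
    have t1 : Tendsto (fun x => g (c*x)/f (c*x)) atTop (nhds 1) := hgf.comp (hmul c hc)
    have tall := (t1.mul (hfratio c hc)).mul hfginv
    rw [one_mul, mul_one] at tall
    apply tall.congr'
    filter_upwards [eventually_ge_atTop X₁, (hmul c hc).eventually_ge_atTop X₁]
      with x hx hcx
    have hxpos : 0 < x := lt_of_lt_of_le hX₁pos hx
    have h1 : f (c*x) ≠ 0 := (hfpos _ (by positivity)).ne'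
    have h2 : f x ≠ 0 := (hfpos _ hxpos).ne'
    have h3 : g x ≠ 0 := (hgpos _ hx).ne'
    field_simp
  have hg1 : Tendsto (fun x => g (x+1)/g x) atTop (nhds 1) := by
    rw [Metric.tendsto_atTop]
    intro ε hε
    have hc : ∃ c : ℝ, 1 < c ∧ 1 - ε/2 < c ^ (-α) := by
      by_cases h : ε/2 > 1
      · exact ⟨2, one_lt_two, lt_of_lt_of_le (by linarith) (Real.rpow_pos_of_pos two_pos _).le⟩
      · have hlt : (1:ℝ) - ε/2 < 1 := by linarith
        have hcont := (Real.continuousAt_rpow_const 1 (-α) (Or.inl one_ne_zero)).tendsto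
        rw [Real.one_rpow] at hcont
        have hev : ∀ᶠ c in nhds (1:ℝ), 1 - ε/2 < c ^ (-α) :=
          hcont.eventually (eventually_gt_nhds hlt)
        have hev2 : ∀ᶠ c in nhdsWithin (1:ℝ) (Ioi 1),
            (1 - ε/2 < c ^ (-α)) ∧ c ∈ Ioi (1:ℝ) :=
          (hev.filter_mono nhdsWithin_le_nhds).and eventually_mem_nhdsWithin
        obtain ⟨c, hc1, hc2⟩ := hev2.exists
        exact ⟨c, hc2, hc1⟩
    obtain ⟨c, hc1, hcα⟩ := hc
    have hc0 : (0:ℝ) < c := by linarith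
    have hev1 : ∀ᶠ x in atTop, 1 - ε/2 < g (c*x)/g x :=
      (hgratio c hc0).eventually (eventually_gt_nhds hcα)
    have hev : ∀ᶠ x in atTop, dist (g (x+1)/g x) 1 < ε := by
      filter_upwards [hev1, eventually_ge_atTop X₁, eventually_ge_atTop (1/(c-1))]
        with x h1 h2 h3
      have hxpos : 0 < x := lt_of_lt_of_le hX₁pos h2
      have hgx : 0 < g x := hgpos x h2
      have hcm1 : 0 < c - 1 := by linarith
      have hx1 : x + 1 ≤ c * x := by
        rw [div_le_iff₀ hcm1] at h3
        nlinarith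
      have hle : g (c*x) ≤ g (x+1) :=
        hganti (mem_Ici.mpr (by linarith)) (mem_Ici.mpr (by linarith)) hx1
      have hub : g (x+1) ≤ g x :=
        hganti (mem_Ici.mpr h2) (mem_Ici.mpr (by linarith)) (by linarith)
      have hlow : 1 - ε/2 < g (x+1)/g x :=
        lt_of_lt_of_le h1 ((div_le_div_iff_of_pos_right hgx).mpr hle)
      have hup : g (x+1)/g x ≤ 1 := div_le_one_of_le₀ hub hgx.le
      rw [Real.dist_eq, abs_of_nonpos (by linarith)]
      linarith
    exact eventually_atTop.mp hev
  set G : ℝ → ℝ := fun x => ∫ t in x..(x+1), g t with hG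
  have hint : ∀ a b : ℝ, X₁ ≤ a → a ≤ b → IntervalIntegrable g volume a b := by
    intro a b ha hab
    apply AntitoneOn.intervalIntegrable
    apply hganti.mono
    rw [uIcc_of_le hab]
    exact fun t ht => le_trans ha ht.1
  have hmemI : ∀ x : ℝ, X₁ ≤ x → x ∈ Ici X₁ := fun x hx => hx
  have hGlb : ∀ x, X₁ ≤ x → g (x+1) ≤ G x := by
    intro x hx
    have hii := hint x (x+1) hx (by linarith)
    have h0 : ∫ _ in x..(x+1), g (x+1) = g (x+1) := by simp
    rw [hG, ← h0]
    apply intervalIntegral.integral_mono_on (by linarith) intervalIntegrable_const hii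
    intro t ht
    exact hganti (hmemI t (le_trans hx ht.1)) (hmemI (x+1) (by linarith)) ht.2
  have hGub : ∀ x, X₁ ≤ x → G x ≤ g x := by
    intro x hx
    have hii := hint x (x+1) hx (by linarith)
    have h0 : ∫ _ in x..(x+1), g x = g x := by simp
    rw [hG, ← h0]
    apply intervalIntegral.integral_mono_on (by linarith) hii intervalIntegrable_const
    intro t ht
    exact hganti (hmemI x hx) (hmemI t (le_trans hx ht.1)) ht.1
  have hGpos : ∀ x, X₁ ≤ x → 0 < G x := fun x hx =>
    lt_of_lt_of_le (hgpos (x+1) (by linarith)) (hGlb x hx)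
  have hGanti : AntitoneOn G (Ici X₁) := by
    intro x hx y hy hxy
    simp only [mem_Ici] at hx hy
    have key : G y = ∫ t in x..(x+1), g (t + (y - x)) := by
      have h1 := intervalIntegral.integral_comp_add_right (a := x) (b := x+1) g (y-x)
      rw [show x + (y-x) = y by ring, show x+1+(y-x) = y+1 by ring] at h1
      simp only [hG]
      rw [← h1]
    rw [key, hG]
    have hshift : IntervalIntegrable (fun t => g (t + (y - x))) volume x (x+1) := by
      have := (hint y (y+1) hy (by linarith)).comp_add_right (y - x)
      rw [show y - (y-x) = x by ring, show y+1-(y-x) = x+1 by ring] at this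
      exact this
    apply intervalIntegral.integral_mono_on (by linarith) hshift (hint x (x+1) hx (by linarith))
    intro t ht
    exact hganti (hmemI t (le_trans hx ht.1)) (hmemI _ (by linarith [ht.1])) (by linarith)
  have hGg : Tendsto (fun x => G x / g x) atTop (nhds 1) := by
    apply tendsto_of_tendsto_of_tendsto_of_le_of_le' hg1 tendsto_const_nhds
    · filter_upwards [eventually_ge_atTop X₁] with x hx
      exact (div_le_div_iff_of_pos_right (hgpos x hx)).mpr (hGlb x hx)
    · filter_upwards [eventually_ge_atTop X₁] with x hx
      exact div_le_one_of_le₀ (hGub x hx) (hgpos x hx).le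
  have hGf : Tendsto (fun x => G x / f x) atTop (nhds 1) := by
    have h := hGg.mul hgf
    rw [mul_one] at h
    apply h.congr'
    filter_upwards [eventually_ge_atTop X₁, eventually_gt_atTop (0:ℝ)] with x hx hx0
    have h1 : g x ≠ 0 := (hgpos x hx).ne'
    have h2 : f x ≠ 0 := (hfpos x hx0).ne'
    simp only [hf] at h2 ⊢
    field_simp
  have hGginv : Tendsto (fun x => g x / G x) atTop (nhds 1) := by
    have h := hGg.inv₀ one_ne_zero
    rw [inv_one] at h
    apply h.congr
    intro x
    rw [inv_div]
  have hGratio : ∀ c : ℝ, 0 < c → Tendsto (fun x => G (c*x)/G x) atTop (nhds (c ^ (-α))) := by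
    intro c hc
    have hmulc : Tendsto (fun x : ℝ => c * x) atTop atTop := tendsto_id.const_mul_atTop hc
    have t1 : Tendsto (fun x => G (c*x)/g (c*x)) atTop (nhds 1) := hGg.comp hmulc
    have tall := (t1.mul (hgratio c hc)).mul hGginv
    rw [one_mul, mul_one] at tall
    apply tall.congr'
    filter_upwards [eventually_ge_atTop X₁, hmulc.eventually_ge_atTop X₁] with x hx hcx
    have h1 : g (c*x) ≠ 0 := (hgpos _ hcx).ne'
    have h2 : g x ≠ 0 := (hgpos _ hx).ne'
    have h3 : G x ≠ 0 := (hGpos _ hx).ne'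
    field_simp
  have hGcontAt : ∀ y : ℝ, X₁ < y → ContinuousAt G y := by
    intro y hy
    set P : ℝ → ℝ := fun z => ∫ t in X₁..z, g t with hP
    have hPc : ∀ z, X₁ < z → z < y + 2 → ContinuousAt P z := by
      intro z h1 h2
      have hii : IntervalIntegrable g volume (min X₁ X₁) (max X₁ (y+2)) := by
        rw [min_self, max_eq_right (by linarith)]
        exact hint X₁ (y+2) le_rfl (by linarith)
      exact (intervalIntegral.continuousWithinAt_primitive (measure_singleton z) hii).continuousAt
        (Icc_mem_nhds h1 h2)
    have hc1 : ContinuousAt (fun z => P (z+1)) y := by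
      have hadd : ContinuousAt (fun z : ℝ => z + 1) y :=
        (continuous_id.add continuous_const).continuousAt
      show ContinuousAt (P ∘ fun z : ℝ => z + 1) y
      exact ContinuousAt.comp (hPc (y+1) (by linarith) (by linarith)) hadd
    have hc2 : ContinuousAt P y := hPc y hy (by linarith)
    have hc := hc1.sub hc2
    apply hc.congr
    filter_upwards [Ioi_mem_nhds hy] with z hz
    have hzX : X₁ ≤ z := le_of_lt hz
    have e := intervalIntegral.integral_interval_sub_left (hint X₁ (z+1) le_rfl (by linarith))
      (hint X₁ z le_rfl hzX)
    simp only [hG, hP]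
    exact e
  set a : ℝ := X₁ + 1 with ha
  have hapos : (0:ℝ) < a := by linarith
  have haX₁ : X₁ ≤ a := by linarith
  have hMa : ∀ x : ℝ, a ≤ max x a := fun x => le_max_right _ _
  have hMpos : ∀ x : ℝ, 0 < max x a := fun x => lt_of_lt_of_le hapos (hMa x)
  have hMX₁ : ∀ x : ℝ, X₁ ≤ max x a := fun x => le_trans haX₁ (hMa x)
  set Lt : ℝ → ℝ := fun x => (max x a) ^ α * G (max x a) * (1 + 1/(max x a)) with hLt
  have hLtpos : ∀ x, 0 < Lt x := by
    intro x
    have h1 : 0 < (max x a) ^ α := Real.rpow_pos_of_pos (hMpos x) _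
    have h2 : 0 < G (max x a) := hGpos _ (hMX₁ x)
    have h3 : 0 < 1 + 1/(max x a) := by
      have := hMpos x
      positivity
    exact mul_pos (mul_pos h1 h2) h3
  set l : ℝ := a ^ α * G a * (1 + 1/a) with hl
  have hlpos : 0 < l := by
    have h1 : 0 < a ^ α := Real.rpow_pos_of_pos hapos _
    have h2 : 0 < G a := hGpos _ haX₁
    have h3 : 0 < 1 + 1/a := by positivity
    exact mul_pos (mul_pos h1 h2) h3
  refine ⟨Lt, ?_, fun x _ => hLtpos x, fun c hc => ?_, ?_, ⟨l, hlpos, ?_⟩, ?_⟩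
  · -- continuity
    have hMcont : Continuous (fun x : ℝ => max x a) := continuous_id.max continuous_const
    have hinner : ContinuousOn (fun y : ℝ => y ^ α * G y * (1 + 1/y)) (Ici a) := by
      apply ContinuousOn.mul
      · apply ContinuousOn.mul
        · exact continuousOn_id.rpow_const fun y hy =>
            Or.inl (ne_of_gt (lt_of_lt_of_le hapos hy))
        · intro y hy
          exact (hGcontAt y (lt_of_lt_of_le (by linarith) hy)).continuousWithinAt
      · apply ContinuousOn.add continuousOn_const
        exact ContinuousOn.div continuousOn_const continuousOn_id
          fun y hy => ne_of_gt (lt_of_lt_of_le hapos hy)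
    have hcomp := ContinuousOn.comp (s := Ioi (0:ℝ)) hinner hMcont.continuousOn
      fun x _ => hMa x
    exact hcomp
  · -- slowly varying
    have hmulc : Tendsto (fun x : ℝ => c * x) atTop atTop := tendsto_id.const_mul_atTop hc
    have t1 := hGratio c hc
    have tinv : Tendsto (fun x : ℝ => 1 + 1/x) atTop (nhds 1) := by
      have h0 : Tendsto (fun x : ℝ => 1/x) atTop (nhds 0) := by
        simpa only [one_div] using tendsto_inv_atTop_zero
      simpa using tendsto_const_nhds.add h0
    have tinvc : Tendsto (fun x : ℝ => 1 + 1/(c*x)) atTop (nhds 1) := tinv.comp hmulc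
    have t23 : Tendsto (fun x : ℝ => (1 + 1/(c*x))/(1 + 1/x)) atTop (nhds 1) := by
      have := tinvc.div tinv one_ne_zero
      rw [div_one] at this
      exact this
    have tall : Tendsto (fun x => c ^ α * (G (c*x)/G x) * ((1 + 1/(c*x))/(1 + 1/x)))
        atTop (nhds (c ^ α * c ^ (-α) * 1)) := (tendsto_const_nhds.mul t1).mul t23
    have hval : c ^ α * c ^ (-α) * 1 = 1 := by
      rw [mul_one, ← Real.rpow_add hc, add_neg_cancel, Real.rpow_zero]
    rw [hval] at tall
    apply tall.congr'
    filter_upwards [eventually_gt_atTop (max a (a/c)), eventually_gt_atTop (0:ℝ)]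
      with x hx hx0
    have h1 : a < x := lt_of_le_of_lt (le_max_left _ _) hx
    have h2 : a < c * x := by
      have : a/c < x := lt_of_le_of_lt (le_max_right _ _) hx
      rw [div_lt_iff₀ hc] at this
      linarith [this]
    have e1 : max x a = x := max_eq_left h1.le
    have e2 : max (c*x) a = c*x := max_eq_left h2.le
    have hGx : G x ≠ 0 := (hGpos x (by linarith)).ne'
    have hGcx : G (c*x) ≠ 0 := (hGpos (c*x) (by linarith)).ne'
    have hxα : x ^ α ≠ 0 := (Real.rpow_pos_of_pos hx0 _).ne'
    have hfrac : (1:ℝ) + 1/x ≠ 0 := by positivity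
    simp only [hLt] at *
    rw [e1, e2, Real.mul_rpow hc.le hx0.le]
    field_simp
  · -- Lt / L → 1
    have tinv : Tendsto (fun x : ℝ => 1 + 1/x) atTop (nhds 1) := by
      have h0 : Tendsto (fun x : ℝ => 1/x) atTop (nhds 0) := by
        simpa only [one_div] using tendsto_inv_atTop_zero
      simpa using tendsto_const_nhds.add h0
    have t := hGf.mul tinv
    rw [mul_one] at t
    apply t.congr'
    filter_upwards [eventually_gt_atTop a] with x hx
    have hx0 : 0 < x := lt_trans hapos hx
    have e1 : max x a = x := max_eq_left hx.le
    have hLx : L x ≠ 0 := (hLpos x hx0).ne'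
    have hxα : x ^ α ≠ 0 := (Real.rpow_pos_of_pos hx0 _).ne'
    simp only [hLt, hf]
    rw [e1, Real.rpow_neg hx0.le]
    field_simp
  · -- limit at 0+
    apply tendsto_const_nhds.congr'
    filter_upwards [mem_nhdsWithin_of_mem_nhds (Iio_mem_nhds hapos)] with x hx
    have e1 : max x a = a := max_eq_right (le_of_lt hx)
    simp only [hLt, hl] at *
    rw [e1]
  · -- strict antitone
    have hQanti : StrictAntiOn (fun y => G y * (1 + 1/y)) (Ici a) := by
      intro x hx y hy hxy
      simp only [mem_Ici] at hx hy
      have hx0 : 0 < x := lt_of_lt_of_le hapos hx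
      have hy0 : 0 < y := lt_of_lt_of_le hapos hy
      have h1 : G y ≤ G x := hGanti (by simp only [mem_Ici]; linarith)
        (by simp only [mem_Ici]; linarith) hxy.le
      have h2 : 1 + 1/y < 1 + 1/x := by
        have := one_div_lt_one_div_of_lt hx0 hxy
        linarith
      have h3 : 0 < 1 + 1/y := by positivity
      calc G y * (1 + 1/y) ≤ G x * (1 + 1/y) := mul_le_mul_of_nonneg_right h1 h3.le
        _ < G x * (1 + 1/x) := by
            exact mul_lt_mul_of_pos_left h2 (hGpos x (by linarith))
    have hrpow_cancel : ∀ x : ℝ, 0 < x → x ^ (-α) * x ^ α = 1 := by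
      intro x hx
      rw [← Real.rpow_add hx, neg_add_cancel, Real.rpow_zero]
    have hFeqle : ∀ x : ℝ, x ≤ a → x ^ (-α) * Lt x = x ^ (-α) * l := by
      intro x hxa
      have e1 : max x a = a := max_eq_right hxa
      simp only [hLt, hl]
      rw [e1]
    have hFeqge : ∀ x : ℝ, a ≤ x → x ^ (-α) * Lt x = G x * (1 + 1/x) := by
      intro x hxa
      have hx0 : 0 < x := lt_of_lt_of_le hapos hxa
      have e1 : max x a = x := max_eq_left hxa
      simp only [hLt]
      rw [e1, ← mul_assoc, ← mul_assoc, hrpow_cancel x hx0, one_mul]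
    have hFa : a ^ (-α) * l = G a * (1 + 1/a) := by
      simp only [hl]
      rw [← mul_assoc, ← mul_assoc, hrpow_cancel a hapos, one_mul]
    intro x hx y hy hxy
    simp only [mem_Ioi] at hx hy
    simp only []
    rcases le_or_gt y a with hya | hya
    · rw [hFeqle x (le_trans hxy.le hya), hFeqle y hya]
      exact mul_lt_mul_of_pos_right (Real.rpow_lt_rpow_of_neg hx hxy (neg_neg_of_pos hα)) hlpos
    · rcases le_or_gt x a with hxa | hxa
      · rw [hFeqle x hxa, hFeqge y hya.le]
        calc G y * (1 + 1/y) < G a * (1 + 1/a) := hQanti self_mem_Ici hya.le hya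
          _ = a ^ (-α) * l := hFa.symm
          _ ≤ x ^ (-α) * l :=
              mul_le_mul_of_nonneg_right
                (Real.rpow_le_rpow_of_nonpos hx hxa (neg_nonpos_of_nonneg hα.le)) hlpos.le
      · rw [hFeqge x hxa.le, hFeqge y (le_trans hxa.le hxy.le)]
        exact hQanti hxa.le (le_trans hxa.le hxy.le) hxy
end
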